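/- arXiv:1203.5650 — 2 statements merged into one kernel-verified Lean document; each statement's English description precedes it below -/
import Mathlib

section
/- There is an isomorphism of chain complexes C̃(M_N)/S_λ ≅ C̃(BD_n^λ) ⊕ C̃(Δ_λ)/S_λ. -/
set_option synthInstance.maxHeartbeats 1000000
set_option maxHeartbeats 1000000

noncomputable section

namespace MatchPaper

attribute [local instance 10] Classical.propDecidable

/-! ### Guarded constructions on additive groups -/

section AddGadgets

variable {A B : Type*} [AddCommGroup A] [AddCommGroup B]

/-- Lift a homomorphism to the quotient (it genuinely descends whenever it kills `S`). -/
def liftOrZero (S : AddSubgroup A) (f : A →+ B) : A ⧸ S →+ B :=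
  if h : S ≤ f.ker then QuotientAddGroup.lift S f h else 0

/-- Descend a homomorphism to quotients (genuine whenever `f S ≤ T`). -/
def descend (S : AddSubgroup A) (T : AddSubgroup B) (f : A →+ B) : A ⧸ S →+ B ⧸ T :=
  if h : S ≤ T.comap f then QuotientAddGroup.map S T f h else 0

/-- Restrict a homomorphism to subgroups (genuine whenever `f Z ≤ Z'`). -/
def restrictHom (f : A →+ B) (Z : AddSubgroup A) (Z' : AddSubgroup B) : Z →+ Z' :=
  if h : ∀ x : Z, f x ∈ Z' then (f.comp Z.subtype).codRestrict Z' (fun x => h x) else 0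

/-- The subquotient `Z / (Bd ∩ Z)`. -/
abbrev subQuot (Z Bd : AddSubgroup A) : Type _ := Z ⧸ Bd.addSubgroupOf Z

/-- The map induced by `f` on subquotients. -/
def subQuotMap (f : A →+ B) (Z Bd : AddSubgroup A) (Z' Bd' : AddSubgroup B) :
    subQuot Z Bd →+ subQuot Z' Bd' :=
  descend (Bd.addSubgroupOf Z) (Bd'.addSubgroupOf Z') (restrictHom f Z Z')

end AddGadgets

/-! ### Chain complexes of abelian groups, group actions, quotient and fixed-difference
subcomplexes, and homology -/

section Abstract

variable (X : ℤ → Type*) [∀ i, AddCommGroup (X i)]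

/-- Transport along an equality of indices. -/
def castAE {i j : ℤ} (h : i = j) : X i ≃+ X j := by subst h; exact AddEquiv.refl _

variable (d : ∀ i : ℤ, X (i + 1) →+ X i)

/-- The boundary map leaving degree `i`. -/
def dfrom (i : ℤ) : X i →+ X (i - 1) :=
  (d (i - 1)).comp (castAE X (show i = (i - 1) + 1 by ring)).toAddMonoidHom

/-- Cycles in degree `i`. -/
def cyc (i : ℤ) : AddSubgroup (X i) := (dfrom X d i).ker

/-- Boundaries in degree `i`. -/
def bdr (i : ℤ) : AddSubgroup (X i) := (d i).range

/-- Homology of the chain complex `(X, d)` in degree `i`. -/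
abbrev Hgrp (i : ℤ) : Type _ := subQuot (cyc X d i) (bdr X d i)

variable {G : Type*} [Group G] (act : G → ∀ i : ℤ, X i ≃+ X i)

/-- The subgroup `C_i^G` generated by the elements `c - g c`. -/
def gsub (i : ℤ) : AddSubgroup (X i) :=
  AddSubgroup.closure {x | ∃ (c : X i) (g : G), x = c - act g i c}

/-- The degree-`i` part of the quotient complex `C/G`. -/
abbrev QX (i : ℤ) : Type _ := X i ⧸ gsub X act i

/-- The boundary map of the quotient complex `C/G`. -/
def qd (i : ℤ) : QX X act (i + 1) →+ QX X act i :=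
  descend (gsub X act (i + 1)) (gsub X act i) (d i)

/-- Homology of the quotient complex `C/G`. -/
abbrev HQgrp (i : ℤ) : Type _ := Hgrp (QX X act) (qd X d act) i

/-- The boundary map of the subcomplex `C^G`. -/
def sd (i : ℤ) : gsub X act (i + 1) →+ gsub X act i :=
  restrictHom (d i) (gsub X act (i + 1)) (gsub X act i)

/-- Homology of the subcomplex `C^G`. -/
abbrev HSgrp (i : ℤ) : Type _ := Hgrp (fun j => gsub X act j) (sd X d act) i

/-- The projection chain map `C → C/G`. -/
def projX (i : ℤ) : X i →+ QX X act i := QuotientAddGroup.mk' _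

/-- The map `π*` induced on homology by the projection `C → C/G`. -/
def piStar (i : ℤ) : Hgrp X d i →+ HQgrp X d act i :=
  subQuotMap (projX X act i) (cyc X d i) (bdr X d i)
    (cyc (QX X act) (qd X d act) i) (bdr (QX X act) (qd X d act) i)

/-- The chain map `φ : C/G → C`, `[c] ↦ ∑ g • c`. -/
def phiX [Fintype G] (i : ℤ) : QX X act i →+ X i :=
  liftOrZero (gsub X act i) (∑ g : G, (act g i).toAddMonoidHom)

/-- The map `φ*` induced on homology by `φ`. -/
def phiStar [Fintype G] (i : ℤ) : HQgrp X d act i →+ Hgrp X d i :=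
  subQuotMap (phiX X act i) (cyc (QX X act) (qd X d act) i) (bdr (QX X act) (qd X d act) i)
    (cyc X d i) (bdr X d i)

end Abstract

/-! ### Guarded constructions on modules -/

section LinGadgets

variable (R : Type*) [CommRing R] {M N : Type*} [AddCommGroup M] [Module R M]
  [AddCommGroup N] [Module R N]

def liftOrZeroL (S : Submodule R M) (f : M →ₗ[R] N) : (M ⧸ S) →ₗ[R] N :=
  if h : S ≤ LinearMap.ker f then S.liftQ f h else 0

def descendL (S : Submodule R M) (T : Submodule R N) (f : M →ₗ[R] N) :
    (M ⧸ S) →ₗ[R] (N ⧸ T) :=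
  if h : S ≤ T.comap f then S.mapQ T f h else 0

def restrictL (f : M →ₗ[R] N) (Z : Submodule R M) (Z' : Submodule R N) : Z →ₗ[R] Z' :=
  if h : ∀ x ∈ Z, f x ∈ Z' then f.restrict h else 0

/-- The subquotient `Z / (Bd ∩ Z)`. -/
abbrev subQuotL (Z Bd : Submodule R M) : Type _ := Z ⧸ Bd.comap Z.subtype

def subQuotMapL (f : M →ₗ[R] N) (Z Bd : Submodule R M) (Z' Bd' : Submodule R N) :
    subQuotL R Z Bd →ₗ[R] subQuotL R Z' Bd' :=
  descendL R (Bd.comap Z.subtype) (Bd'.comap Z'.subtype) (restrictL R f Z Z')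

end LinGadgets

/-! ### Reduced simplicial chains and homology of a family of finite sets

A family `K : Finset V → Prop` of finite subsets of a vertex type `V` (in our applications a
simplicial complex, in particular closed under taking subsets and containing `∅`) has reduced
simplicial chain groups over a ring `R`: the degree-`d` chain group is free on the faces of
cardinality `d + 1`, i.e. we index chain groups by the cardinality `c = d + 1` of the faces,
with the empty face (cardinality `0`, degree `-1`) giving the augmentation.  Orientations are
induced by an injection `rank : V → ℕ` of the vertices into `ℕ`. -/

section Simplicial

variable (R : Type*) [CommRing R]

/-- Chains on the faces of cardinality `c` of the family `K`. -/
abbrev SChain {V : Type*} (K : Finset V → Prop) (c : ℕ) : Type _ :=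
  {σ : Finset V // K σ ∧ σ.card = c} →₀ R

/-- The basis chain of a face, or zero for a non-face. -/
def basisOrZero {V : Type*} (K : Finset V → Prop) (c : ℕ) (τ : Finset V) : SChain R K c :=
  if h : K τ ∧ τ.card = c then Finsupp.single ⟨τ, h⟩ (1 : R) else 0

/-- The simplicial boundary map, with signs determined by the ordering of the vertices via
`rank`. -/
def bdry {V : Type*} [DecidableEq V] (rank : V → ℕ) (K : Finset V → Prop) (c : ℕ) :
    SChain R K (c + 1) →ₗ[R] SChain R K c :=
  Finsupp.lsum R fun σ => LinearMap.toSpanSingleton R _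
    (∑ v ∈ σ.1, ((-1 : ℤ) ^ ((σ.1.filter fun u => rank u < rank v).card) •
      basisOrZero R K c (σ.1.erase v)))

/-- The orientation sign of a map `f` on a face `σ`: the parity of the number of inversions. -/
def mapSign {V W : Type*} (rank : V → ℕ) (rank' : W → ℕ) (f : V → W) (σ : Finset V) : ℤ :=
  (-1) ^ (((σ ×ˢ σ).filter fun p => rank p.1 < rank p.2 ∧ rank' (f p.2) < rank' (f p.1)).card)

/-- The chain map induced by a map `f` on vertices, taking orientations into account. -/
def chainMap {V W : Type*} [DecidableEq V] [DecidableEq W] (rank : V → ℕ) (rank' : W → ℕ)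
    (f : V → W) (K : Finset V → Prop) (K' : Finset W → Prop) (c : ℕ) :
    SChain R K c →ₗ[R] SChain R K' c :=
  Finsupp.lsum R fun σ => LinearMap.toSpanSingleton R _
    (mapSign rank rank' f σ.1 • basisOrZero R K' c (σ.1.image f))

/-- Cycles among the chains on faces of cardinality `c` (for `c = 0` everything is a cycle:
the boundary map leaving degree `-1` is zero). -/
def cycLow {V : Type*} [DecidableEq V] (rank : V → ℕ) (K : Finset V → Prop) :
    (c : ℕ) → Submodule R (SChain R K c)
  | 0 => ⊤
  | (m + 1) => LinearMap.ker (bdry R rank K m)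

/-- Reduced simplicial homology at the faces of cardinality `c`, i.e. in degree `c - 1`. -/
abbrev RHc {V : Type*} [DecidableEq V] (rank : V → ℕ) (K : Finset V → Prop) (c : ℕ) : Type _ :=
  subQuotL R (cycLow R rank K c) (LinearMap.range (bdry R rank K c))

/-- Reduced simplicial homology `H̃_dg(K; R)`. -/
abbrev RH {V : Type*} [DecidableEq V] (rank : V → ℕ) (K : Finset V → Prop) (dg : ℕ) : Type _ :=
  RHc R rank K (dg + 1)

end Simplicial

/-! ### The matching complex and the complexes of graphs of bounded degree -/

/-- The standard injection of pairs into `ℕ`, inducing the lexicographic order. -/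
def rankP (m : ℕ) : Fin m × Fin m → ℕ := fun p => p.1.val * m + p.2.val

/-- A face of the matching complex `M_m`: a set of edges `(i, j)`, `i < j`, of the complete
graph on `Fin m`, no two of which share an endpoint. -/
def IsMatching (m : ℕ) (σ : Finset (Fin m × Fin m)) : Prop :=
  (∀ p ∈ σ, p.1 < p.2) ∧
    ∀ p ∈ σ, ∀ q ∈ σ, p ≠ q → p.1 ≠ q.1 ∧ p.1 ≠ q.2 ∧ p.2 ≠ q.1 ∧ p.2 ≠ q.2

/-- `H̃_dg(M_m; R)`, the reduced homology of the matching complex on `m` vertices. -/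
abbrev MH (R : Type*) [CommRing R] (m dg : ℕ) : Type _ := RH R (rankP m) (IsMatching m) dg

/-- The degree of the vertex `i` in the graph `σ` (a loop `(i, i)` counts twice). -/
def degB {n : ℕ} (σ : Finset (Fin n × Fin n)) (i : Fin n) : ℕ :=
  ∑ p ∈ σ, ((if p.1 = i then 1 else 0) + (if p.2 = i then 1 else 0))

/-- A face of `BD_n^λ`: a graph on `Fin n` (loops allowed, encoded as pairs `(i, j)` with
`i ≤ j`) in which the vertex `i` has degree at most `λ i`. -/
def IsBDGraph {n : ℕ} (lam : Fin n → ℕ) (σ : Finset (Fin n × Fin n)) : Prop :=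
  (∀ p ∈ σ, p.1 ≤ p.2) ∧ ∀ i, degB σ i ≤ lam i

/-- `H̃_dg(BD_n^λ; R)`. -/
abbrev BDH (R : Type*) [CommRing R] {n : ℕ} (lam : Fin n → ℕ) (dg : ℕ) : Type _ :=
  RH R (rankP n) (IsBDGraph lam) dg

/-! ### The Young group action on the matching complex -/

/-- The action of a permutation of the vertices on the edges of the complete graph. -/
def emap {m : ℕ} (g : Equiv.Perm (Fin m)) : Fin m × Fin m → Fin m × Fin m :=
  fun p => (min (g p.1) (g p.2), max (g p.1) (g p.2))

/-- The quotient map on edges induced by a surjection `kap` on vertices (whose fibers are the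
blocks `U_i` of the partition). -/
def kmap {N n : ℕ} (kap : Fin N → Fin n) : Fin N × Fin N → Fin n × Fin n :=
  fun p => (min (kap p.1) (kap p.2), max (kap p.1) (kap p.2))

/-- Membership of a permutation in the Young group: it preserves each block of the partition
determined by `kap`. -/
def KeepsBlocks {N n : ℕ} (kap : Fin N → Fin n) (g : Equiv.Perm (Fin N)) : Prop :=
  ∀ x, kap (g x) = kap x

section YoungAction

variable (R : Type*) [CommRing R]

/-- The action of a permutation `g` of the `N` vertices on chains. -/
def actC (N : ℕ) (K : Finset (Fin N × Fin N) → Prop) (g : Equiv.Perm (Fin N)) (c : ℕ) :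
    SChain R K c →ₗ[R] SChain R K c :=
  chainMap R (rankP N) (rankP N) (emap g) K K c

/-- The submodule of chains generated by the elements `c - g c`, `g` in the Young group. -/
def ysub (N n : ℕ) (kap : Fin N → Fin n) (K : Finset (Fin N × Fin N) → Prop) (c : ℕ) :
    Submodule R (SChain R K c) :=
  Submodule.span R {x | ∃ (ch : SChain R K c) (g : Equiv.Perm (Fin N)),
    KeepsBlocks kap g ∧ x = ch - actC R N K g c ch}

/-- The chains of the quotient complex `C̃/S_λ`. -/
abbrev QC (N n : ℕ) (kap : Fin N → Fin n) (K : Finset (Fin N × Fin N) → Prop) (c : ℕ) :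
    Type _ :=
  SChain R K c ⧸ ysub R N n kap K c

/-- The boundary map of the quotient complex `C̃/S_λ`. -/
def qbdry (N n : ℕ) (kap : Fin N → Fin n) (K : Finset (Fin N × Fin N) → Prop) (c : ℕ) :
    QC R N n kap K (c + 1) →ₗ[R] QC R N n kap K c :=
  descendL R (ysub R N n kap K (c + 1)) (ysub R N n kap K c) (bdry R (rankP N) K c)

/-- Homology of the quotient complex `C̃(M_N)/S_λ` in degree `dg`. -/
abbrev QMH (N n : ℕ) (kap : Fin N → Fin n) (dg : ℕ) : Type _ :=
  subQuotL R (LinearMap.ker (qbdry R N n kap (IsMatching N) dg))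
    (LinearMap.range (qbdry R N n kap (IsMatching N) (dg + 1)))

/-- The chain map `φ : C̃/S_λ → C̃`, `[c] ↦ ∑_{g ∈ S_λ} g c`. -/
def phiC (N n : ℕ) (kap : Fin N → Fin n) (K : Finset (Fin N × Fin N) → Prop) (c : ℕ) :
    QC R N n kap K c →ₗ[R] SChain R K c :=
  liftOrZeroL R (ysub R N n kap K c)
    (∑ g ∈ Finset.univ.filter (fun g : Equiv.Perm (Fin N) => ∀ x, kap (g x) = kap x),
      actC R N K g c)

/-- The map `φ* : H_dg(C̃(M_N)/S_λ) → H̃_dg(M_N; R)` induced by `φ`. -/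
def phiStarM (N n : ℕ) (kap : Fin N → Fin n) (dg : ℕ) :
    QMH R N n kap dg →ₗ[R] MH R N dg :=
  subQuotMapL R (phiC R N n kap (IsMatching N) (dg + 1))
    (LinearMap.ker (qbdry R N n kap (IsMatching N) dg))
    (LinearMap.range (qbdry R N n kap (IsMatching N) (dg + 1)))
    (cycLow R (rankP N) (IsMatching N) (dg + 1))
    (LinearMap.range (bdry R (rankP N) (IsMatching N) (dg + 1)))

end YoungAction

/-! ### The subfamilies `Δ_λ` and `Γ_λ` of the matching complex -/

/-- `σ` contains two distinct edges `ab`, `cd` with `a, c` in the same block and `b, d` in the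
same block. -/
def InDelta {N n : ℕ} (kap : Fin N → Fin n) (σ : Finset (Fin N × Fin N)) : Prop :=
  ∃ p ∈ σ, ∃ q ∈ σ, p ≠ q ∧
    ((kap p.1 = kap q.1 ∧ kap p.2 = kap q.2) ∨ (kap p.1 = kap q.2 ∧ kap p.2 = kap q.1))

/-- A face of `Δ_λ`. -/
def IsDelta {N n : ℕ} (kap : Fin N → Fin n) (σ : Finset (Fin N × Fin N)) : Prop :=
  IsMatching N σ ∧ InDelta kap σ

/-- A face of `Γ_λ = M_N \ Δ_λ`. -/
def IsGamma {N n : ℕ} (kap : Fin N → Fin n) (σ : Finset (Fin N × Fin N)) : Prop :=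
  IsMatching N σ ∧ ¬ InDelta kap σ

section YoungMore

variable (R : Type*) [CommRing R]

/-- The map `κ̂ : C̃(Γ_λ)/S_λ → C̃(BD_n^λ)`, `[c] ↦ κ(c)`. -/
def khat (N n : ℕ) (kap : Fin N → Fin n) (lam : Fin n → ℕ) (c : ℕ) :
    QC R N n kap (IsGamma kap) c →ₗ[R] SChain R (IsBDGraph lam) c :=
  liftOrZeroL R (ysub R N n kap (IsGamma kap) c)
    (chainMap R (rankP N) (rankP n) (kmap kap) (IsGamma kap) (IsBDGraph lam) c)

/-- The boundary map of the subcomplex `C̃(M_N; R)^{S_λ}`. -/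
def sbdry (N n : ℕ) (kap : Fin N → Fin n) (c : ℕ) :
    ysub R N n kap (IsMatching N) (c + 1) →ₗ[R] ysub R N n kap (IsMatching N) c :=
  restrictL R (bdry R (rankP N) (IsMatching N) c)
    (ysub R N n kap (IsMatching N) (c + 1)) (ysub R N n kap (IsMatching N) c)

/-- Homology of the subcomplex `C̃(M_N; R)^{S_λ}` in degree `dg`: the cycles of the
subcomplex (elements of the subcomplex with vanishing boundary) modulo the boundaries of
elements of the subcomplex. -/
abbrev SubH (N n : ℕ) (kap : Fin N → Fin n) (dg : ℕ) : Type _ :=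
  subQuotL R
    (ysub R N n kap (IsMatching N) (dg + 1) ⊓ cycLow R (rankP N) (IsMatching N) (dg + 1))
    ((ysub R N n kap (IsMatching N) (dg + 1 + 1)).map (bdry R (rankP N) (IsMatching N) (dg + 1)))

/-! ### Inclusion maps between matching complexes -/

/-- The chain map induced by the inclusion `M_m ⊆ M_{m'}`. -/
def inclChain (m m' : ℕ) (h : m ≤ m') (c : ℕ) :
    SChain R (IsMatching m) c →ₗ[R] SChain R (IsMatching m') c :=
  chainMap R (rankP m) (rankP m') (fun p => (Fin.castLE h p.1, Fin.castLE h p.2))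
    (IsMatching m) (IsMatching m') c

/-- The map `H̃_dg(M_m; R) → H̃_dg(M_{m'}; R)` induced by the inclusion. -/
def inclStar (m m' : ℕ) (h : m ≤ m') (dg : ℕ) : MH R m dg →ₗ[R] MH R m' dg :=
  subQuotMapL R (inclChain R m m' h (dg + 1))
    (cycLow R (rankP m) (IsMatching m) (dg + 1))
    (LinearMap.range (bdry R (rankP m) (IsMatching m) (dg + 1)))
    (cycLow R (rankP m') (IsMatching m') (dg + 1))
    (LinearMap.range (bdry R (rankP m') (IsMatching m') (dg + 1)))

/-! ### The pair `(M_m, M_m \ e)`, where `e` is the last edge -/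

/-- The edge `e` between the last two of the `m` vertices. -/
def eEdge (m : ℕ) (h : 2 ≤ m) : Fin m × Fin m := (⟨m - 2, by omega⟩, ⟨m - 1, by omega⟩)

/-- A face of `M_m \ e`: a matching not containing the edge `e`. -/
def MnMinusE (m : ℕ) (h : 2 ≤ m) (σ : Finset (Fin m × Fin m)) : Prop :=
  IsMatching m σ ∧ eEdge m h ∉ σ

/-- Pass from a set of edges avoiding the last two vertices of `Fin m` to a set of edges on
`Fin (m - 2)`. -/
def shrink (m : ℕ) (σ : Finset (Fin m × Fin m)) : Finset (Fin (m - 2) × Fin (m - 2)) :=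
  (σ.filter fun p => p.1.val < m - 2 ∧ p.2.val < m - 2).attach.image
    fun p => (⟨p.1.1.val, (Finset.mem_filter.mp p.2).2.1⟩,
              ⟨p.1.2.val, (Finset.mem_filter.mp p.2).2.2⟩)

/-- The chain map realizing the composition
`C̃(M_m) → C̃(M_m, M_m \ e) ≅ C̃(M_{m - 2})[1]`: a face `σ` containing `e` is written as
`σ = ± e ∧ w` and sent to `± w`, viewed in the matching complex on the remaining `m - 2`
vertices; a face not containing `e` is sent to zero. -/
def theta (m : ℕ) (hm : 2 ≤ m) (c : ℕ) :
    SChain R (IsMatching m) (c + 1) →ₗ[R] SChain R (IsMatching (m - 2)) c :=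
  Finsupp.lsum R fun σ => LinearMap.toSpanSingleton R _
    (if eEdge m hm ∈ σ.1 then
      ((-1 : ℤ) ^ c) • basisOrZero R (IsMatching (m - 2)) c (shrink m (σ.1.erase (eEdge m hm)))
     else 0)

/-- The map `H̃_dg(M_m \ e; R) → H̃_dg(M_m; R)` induced by the inclusion. -/
def inclEStar (m : ℕ) (hm : 2 ≤ m) (dg : ℕ) :
    RH R (rankP m) (MnMinusE m hm) dg →ₗ[R] MH R m dg :=
  subQuotMapL R (chainMap R (rankP m) (rankP m) id (MnMinusE m hm) (IsMatching m) (dg + 1))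
    (cycLow R (rankP m) (MnMinusE m hm) (dg + 1))
    (LinearMap.range (bdry R (rankP m) (MnMinusE m hm) (dg + 1)))
    (cycLow R (rankP m) (IsMatching m) (dg + 1))
    (LinearMap.range (bdry R (rankP m) (IsMatching m) (dg + 1)))

/-- The composition `H̃_dg(M_m; R) → H_dg(M_m, M_m \ e; R) ≅ H̃_{dg - 1}(M_{m - 2}; R)` of the
map to relative homology with the canonical isomorphism. -/
def thetaStar (m : ℕ) (hm : 2 ≤ m) (dg : ℕ) :
    MH R m dg →ₗ[R] RHc R (rankP (m - 2)) (IsMatching (m - 2)) dg :=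
  subQuotMapL R (theta R m hm dg)
    (cycLow R (rankP m) (IsMatching m) (dg + 1))
    (LinearMap.range (bdry R (rankP m) (IsMatching m) (dg + 1)))
    (cycLow R (rankP (m - 2)) (IsMatching (m - 2)) dg)
    (LinearMap.range (bdry R (rankP (m - 2)) (IsMatching (m - 2)) dg))

end YoungMore

end MatchPaper

end
noncomputable section
namespace MatchProof
open MatchPaper Finset

attribute [local instance 10] Classical.propDecidable

lemma rankP_injective (m : ℕ) : Function.Injective (rankP m) := by
  rintro ⟨a, b⟩ ⟨c, d⟩ h
  simp only [rankP] at h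
  have hb := b.isLt; have hd := d.isLt
  have hac : a.val = c.val := by
    by_contra hne
    rcases Nat.lt_or_ge a.val c.val with hlt | hge
    · have h1 : a.val * m + b.val < (a.val + 1) * m := by
        rw [Nat.add_mul, one_mul]; omega
      have h2 : (a.val + 1) * m ≤ c.val * m := Nat.mul_le_mul_right m hlt
      rw [Nat.add_mul, one_mul] at h2
      omega
    · have hlt : c.val < a.val := by omega
      have h1 : c.val * m + d.val < (c.val + 1) * m := by
        rw [Nat.add_mul, one_mul]; omega
      have h2 : (c.val + 1) * m ≤ a.val * m := Nat.mul_le_mul_right m hlt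
      rw [Nat.add_mul, one_mul] at h2
      omega
  simp only [Prod.mk.injEq]
  refine ⟨Fin.ext hac, Fin.ext ?_⟩
  rw [hac] at h
  omega

lemma minmax_cases {α : Type*} [LinearOrder α] {a b c d : α}
    (h : (min a b, max a b) = (min c d, max c d)) :
    (a = c ∧ b = d) ∨ (a = d ∧ b = c) := by
  rw [Prod.mk.injEq] at h
  rcases le_total a b with h1 | h1 <;> rcases le_total c d with h2 | h2
  · rw [min_eq_left h1, max_eq_right h1, min_eq_left h2, max_eq_right h2] at h; tauto
  · rw [min_eq_left h1, max_eq_right h1, min_eq_right h2, max_eq_left h2] at h; tauto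
  · rw [min_eq_right h1, max_eq_left h1, min_eq_left h2, max_eq_right h2] at h; tauto
  · rw [min_eq_right h1, max_eq_left h1, min_eq_right h2, max_eq_left h2] at h; tauto

section Basics
variable {N n : ℕ} {kap : Fin N → Fin n}

lemma kmap_eq_iff {p q : Fin N × Fin N} :
    kmap kap p = kmap kap q ↔
      ((kap p.1 = kap q.1 ∧ kap p.2 = kap q.2) ∨ (kap p.1 = kap q.2 ∧ kap p.2 = kap q.1)) := by
  constructor
  · intro h; exact minmax_cases h
  · rintro (⟨h1, h2⟩ | ⟨h1, h2⟩) <;> simp [kmap, h1, h2, min_comm, max_comm]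

lemma inDelta_iff {σ : Finset (Fin N × Fin N)} :
    InDelta kap σ ↔ ∃ p ∈ σ, ∃ q ∈ σ, p ≠ q ∧ kmap kap p = kmap kap q := by
  unfold InDelta
  constructor
  · rintro ⟨p, hp, q, hq, hne, hc⟩; exact ⟨p, hp, q, hq, hne, kmap_eq_iff.mpr hc⟩
  · rintro ⟨p, hp, q, hq, hne, hc⟩; exact ⟨p, hp, q, hq, hne, kmap_eq_iff.mp hc⟩

lemma inDelta_mono {σ τ : Finset (Fin N × Fin N)} (hst : σ ⊆ τ) (h : InDelta kap σ) :
    InDelta kap τ := by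
  obtain ⟨p, hp, q, hq, h3⟩ := h
  exact ⟨p, hst hp, q, hst hq, h3⟩

lemma gamma_injOn {σ : Finset (Fin N × Fin N)} (h : IsGamma kap σ) :
    Set.InjOn (kmap kap) ↑σ := by
  intro p hp q hq hpq
  by_contra hne
  exact h.2 (inDelta_iff.mpr ⟨p, Finset.mem_coe.mp hp, q, Finset.mem_coe.mp hq, hne, hpq⟩)

lemma isMatching_erase {σ : Finset (Fin N × Fin N)} (h : IsMatching N σ)
    (v : Fin N × Fin N) : IsMatching N (σ.erase v) :=
  ⟨fun p hp => h.1 p (mem_of_mem_erase hp),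
   fun p hp q hq => h.2 p (mem_of_mem_erase hp) q (mem_of_mem_erase hq)⟩

lemma isGamma_erase {σ : Finset (Fin N × Fin N)} (h : IsGamma kap σ)
    (v : Fin N × Fin N) : IsGamma kap (σ.erase v) :=
  ⟨isMatching_erase h.1 v, fun hd => h.2 (inDelta_mono (erase_subset v σ) hd)⟩

lemma matching_gamma_or_delta {σ : Finset (Fin N × Fin N)} (h : IsMatching N σ) :
    IsGamma kap σ ∨ IsDelta kap σ := by
  by_cases hd : InDelta kap σ
  · exact Or.inr ⟨h, hd⟩
  · exact Or.inl ⟨h, hd⟩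

/-- endpoints uniqueness in a matching -/
lemma matching_endpoint_unique {σ : Finset (Fin N × Fin N)} (h : IsMatching N σ)
    {p q : Fin N × Fin N} (hp : p ∈ σ) (hq : q ∈ σ) {x : Fin N}
    (hxp : x = p.1 ∨ x = p.2) (hxq : x = q.1 ∨ x = q.2) : p = q := by
  by_contra hne
  obtain ⟨h1, h2, h3, h4⟩ := h.2 p hp q hq hne
  rcases hxp with rfl | rfl <;> rcases hxq with h5 | h5 <;> simp_all

end Basics

section Emap
variable {N n : ℕ} {kap : Fin N → Fin n} (g : Equiv.Perm (Fin N))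

lemma emap_eq_or (p : Fin N × Fin N) :
    emap g p = (g p.1, g p.2) ∨ emap g p = (g p.2, g p.1) := by
  unfold emap
  rcases le_total (g p.1) (g p.2) with h | h
  · left; simp [min_eq_left h, max_eq_right h]
  · right; simp [min_eq_right h, max_eq_left h]

lemma emap_fst_lt_snd {p : Fin N × Fin N} (h : p.1 < p.2) :
    (emap g p).1 < (emap g p).2 :=
  min_lt_max.mpr (fun he => absurd (g.injective he) (ne_of_lt h))

lemma emap_injOn {σ : Finset (Fin N × Fin N)} (hm : IsMatching N σ) :
    Set.InjOn (emap g) ↑σ := by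
  intro p hp q hq h
  have h1 := hm.1 p (Finset.mem_coe.mp hp)
  have h2 := hm.1 q (Finset.mem_coe.mp hq)
  rcases minmax_cases h with ⟨e1, e2⟩ | ⟨e1, e2⟩
  · have := g.injective e1; have := g.injective e2
    exact Prod.ext (by assumption) (by assumption)
  · have f1 := g.injective e1; have f2 := g.injective e2
    exfalso; rw [f1] at h1; rw [f2] at h1; exact absurd (h1.trans h2) (lt_irrefl _)

lemma isMatching_image_emap {σ : Finset (Fin N × Fin N)} (hm : IsMatching N σ) :
    IsMatching N (σ.image (emap g)) := by
  constructor
  · intro p hp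
    obtain ⟨q, hq, rfl⟩ := mem_image.mp hp
    exact emap_fst_lt_snd g (hm.1 q hq)
  · intro p hp q hq hne
    obtain ⟨p₀, hp₀, rfl⟩ := mem_image.mp hp
    obtain ⟨q₀, hq₀, rfl⟩ := mem_image.mp hq
    have hne₀ : p₀ ≠ q₀ := fun h => hne (by rw [h])
    obtain ⟨d1, d2, d3, d4⟩ := hm.2 p₀ hp₀ q₀ hq₀ hne₀
    have hgne : ∀ a b : Fin N, a ≠ b → g a ≠ g b := fun a b hab => fun h => hab (g.injective h)
    rcases emap_eq_or g p₀ with h1 | h1 <;> rcases emap_eq_or g q₀ with h2 | h2 <;>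
      rw [h1, h2] <;>
      exact ⟨hgne _ _ (by assumption), hgne _ _ (by assumption),
             hgne _ _ (by assumption), hgne _ _ (by assumption)⟩

lemma kmap_emap {g : Equiv.Perm (Fin N)} (hg : KeepsBlocks kap g) (p : Fin N × Fin N) :
    kmap kap (emap g p) = kmap kap p := by
  rcases emap_eq_or g p with h | h <;> rw [h] <;>
    simp [kmap, hg _, min_comm, max_comm]

lemma inDelta_image_emap {σ : Finset (Fin N × Fin N)} (hm : IsMatching N σ)
    {g : Equiv.Perm (Fin N)} (hg : KeepsBlocks kap g) :
    InDelta kap (σ.image (emap g)) ↔ InDelta kap σ := by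
  rw [inDelta_iff, inDelta_iff]
  constructor
  · rintro ⟨p', hp', q', hq', hne, hk⟩
    obtain ⟨p, hp, rfl⟩ := mem_image.mp hp'
    obtain ⟨q, hq, rfl⟩ := mem_image.mp hq'
    refine ⟨p, hp, q, hq, fun h => hne (by rw [h]), ?_⟩
    rwa [kmap_emap hg, kmap_emap hg] at hk
  · rintro ⟨p, hp, q, hq, hne, hk⟩
    refine ⟨_, mem_image_of_mem _ hp, _, mem_image_of_mem _ hq, ?_, ?_⟩
    · intro h; exact hne (emap_injOn g hm (Finset.mem_coe.mpr hp) (Finset.mem_coe.mpr hq) h)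
    · rw [kmap_emap hg, kmap_emap hg]; exact hk

end Emap
end MatchProof
end
noncomputable section
namespace MatchProof
open MatchPaper Finset
set_option linter.unusedSectionVars false

attribute [local instance 10] Classical.propDecidable

section Counting
variable {V W X : Type*} [DecidableEq V] [DecidableEq W] [DecidableEq X]

/-- inversion count underlying `mapSign` -/
def inv2 (r : V → ℕ) (r' : W → ℕ) (f : V → W) (s : Finset V) : ℕ :=
  ((s ×ˢ s).filter fun q => r q.1 < r q.2 ∧ r' (f q.2) < r' (f q.1)).card

lemma mapSign_eq (r : V → ℕ) (r' : W → ℕ) (f : V → W) (s : Finset V) :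
    mapSign r r' f s = (-1 : ℤ) ^ inv2 r r' f s := rfl

lemma mapSign_congr {r : V → ℕ} {r' : W → ℕ} {f f' : V → W} {s : Finset V}
    (h : ∀ x ∈ s, f x = f' x) : mapSign r r' f s = mapSign r r' f' s := by
  unfold mapSign
  have he : (filter (fun q : V × V => r q.1 < r q.2 ∧ r' (f q.2) < r' (f q.1)) (s ×ˢ s))
       = (filter (fun q : V × V => r q.1 < r q.2 ∧ r' (f' q.2) < r' (f' q.1)) (s ×ˢ s)) := by
    apply filter_congr
    intro q hq
    rw [mem_product] at hq
    simp [h q.1 hq.1, h q.2 hq.2]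
  rw [he]

lemma image_congr' {f f' : V → W} {s : Finset V} (h : ∀ x ∈ s, f x = f' x) :
    s.image f = s.image f' := by
  apply image_congr
  intro x hx; exact h x hx

lemma neg_one_pow_congr {a b : ℕ} (h : a % 2 = b % 2) : ((-1 : ℤ)) ^ a = (-1) ^ b := by
  rcases Nat.even_or_odd a with ha | ha
  · have hb : Even b := Nat.even_iff.mpr (by rw [← h]; exact Nat.even_iff.mp ha)
    rw [ha.neg_one_pow, hb.neg_one_pow]
  · have hb : Odd b := Nat.odd_iff.mpr (by rw [← h]; exact Nat.odd_iff.mp ha)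
    rw [ha.neg_one_pow, hb.neg_one_pow]

lemma mapSign_mul_self (r : V → ℕ) (r' : W → ℕ) (f : V → W) (s : Finset V) :
    mapSign r r' f s * mapSign r r' f s = 1 := by
  rw [mapSign_eq, ← pow_add]
  exact Even.neg_one_pow ⟨_, rfl⟩

/-- D0 : removing a point from the inversion count. -/
lemma inv2_erase {r : V → ℕ} {r' : W → ℕ} {f : V → W} {s : Finset V} {p : V} (hp : p ∈ s) :
    inv2 r r' f s = inv2 r r' f (s.erase p)
      + (s.filter fun u => r u < r p ∧ r' (f p) < r' (f u)).card
      + (s.filter fun v => r p < r v ∧ r' (f v) < r' (f p)).card := by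
  have h1 : inv2 r r' f (s.erase p)
      = ((s ×ˢ s).filter fun q => (¬ q.1 = p ∧ ¬ q.2 = p) ∧
          (r q.1 < r q.2 ∧ r' (f q.2) < r' (f q.1))).card := by
    unfold inv2
    congr 1
    ext ⟨a, b⟩
    simp only [mem_filter, mem_product, mem_erase]
    tauto
  have h2 : (s.filter fun u => r u < r p ∧ r' (f p) < r' (f u)).card
      = ((s ×ˢ s).filter fun q => q.2 = p ∧ (r q.1 < r p ∧ r' (f p) < r' (f q.1))).card := by
    rw [eq_comm]
    apply card_bij (fun q _ => q.1)
    · rintro ⟨a, b⟩ hq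
      simp only [mem_filter, mem_product] at hq ⊢
      exact ⟨hq.1.1, hq.2.2⟩
    · rintro ⟨a, b⟩ ha ⟨a', b'⟩ hb hab
      simp only [mem_filter, mem_product] at ha hb
      simp only at hab
      rw [Prod.mk.injEq]
      exact ⟨hab, ha.2.1.trans hb.2.1.symm⟩
    · intro u hu
      simp only [mem_filter] at hu
      exact ⟨(u, p), by simp only [mem_filter, mem_product]; exact ⟨⟨hu.1, hp⟩, trivial, hu.2⟩, rfl⟩
  have h3 : (s.filter fun v => r p < r v ∧ r' (f v) < r' (f p)).card
      = ((s ×ˢ s).filter fun q => ¬ q.2 = p ∧ q.1 = p ∧ (r p < r q.2 ∧ r' (f q.2) < r' (f p))).card := by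
    rw [eq_comm]
    apply card_bij (fun q _ => q.2)
    · rintro ⟨a, b⟩ hq
      simp only [mem_filter, mem_product] at hq ⊢
      exact ⟨hq.1.2, hq.2.2.2⟩
    · rintro ⟨a, b⟩ ha ⟨a', b'⟩ hb hab
      simp only [mem_filter, mem_product] at ha hb
      simp only at hab
      rw [Prod.mk.injEq]
      exact ⟨ha.2.2.1.trans hb.2.2.1.symm, hab⟩
    · intro u hu
      simp only [mem_filter] at hu
      refine ⟨(p, u), ?_, rfl⟩
      simp only [mem_filter, mem_product]
      refine ⟨⟨hp, hu.1⟩, ?_, trivial, hu.2⟩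
      intro hup
      rw [hup] at hu
      exact absurd hu.2.1 (lt_irrefl _)
  rw [h1, h2, h3, inv2, card_filter, card_filter, card_filter, card_filter,
    ← Finset.sum_add_distrib, ← Finset.sum_add_distrib]
  apply Finset.sum_congr rfl
  rintro ⟨a, b⟩ hq
  by_cases ha : a = p <;> by_cases hb : b = p <;>
    simp only [ha, hb, not_true, not_false_iff, true_and, false_and, and_true, and_false,
      if_false] <;> split_ifs <;> omega
end Counting
end MatchProof
end
noncomputable section
namespace MatchProof
open MatchPaper Finset
set_option linter.unusedSectionVars false

attribute [local instance 10] Classical.propDecidable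

section Counting2
variable {V W X : Type*} [DecidableEq V] [DecidableEq W] [DecidableEq X]

lemma card_filter_xor (s : Finset V) (P Q R : V → Prop)
    [DecidablePred P] [DecidablePred Q] [DecidablePred R]
    (h : ∀ a ∈ s, P a ↔ (Q a ↔ ¬ R a)) :
    ((s.filter Q).card + (s.filter R).card) % 2 = (s.filter P).card % 2 := by
  rw [card_filter, card_filter, card_filter, ← Finset.sum_add_distrib,
      Finset.sum_nat_mod]
  rw [Finset.sum_nat_mod _ 2 (fun a => if P a then 1 else 0)]
  congr 1
  apply Finset.sum_congr rfl
  intro a ha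
  have h' := h a ha
  split_ifs <;> first | rfl | omega | (exfalso; tauto)

/-- transport of the inversion count along the image. -/
lemma inv2_image {r' : W → ℕ} {r'' : X → ℕ} {f₁ : V → W} {f₂ : W → X} {s : Finset V}
    (h1 : Set.InjOn f₁ ↑s) :
    inv2 r' r'' f₂ (s.image f₁)
      = ((s ×ˢ s).filter fun q =>
          r' (f₁ q.1) < r' (f₁ q.2) ∧ r'' (f₂ (f₁ q.2)) < r'' (f₂ (f₁ q.1))).card := by
  rw [inv2, eq_comm]
  apply card_bij (fun q _ => (f₁ q.1, f₁ q.2))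
  · rintro ⟨a, b⟩ hq
    simp only [mem_filter, mem_product] at hq ⊢
    exact ⟨⟨mem_image_of_mem _ hq.1.1, mem_image_of_mem _ hq.1.2⟩, hq.2⟩
  · rintro ⟨a, b⟩ ha ⟨c, d⟩ hc hac
    simp only [mem_filter, mem_product] at ha hc
    simp only [Prod.mk.injEq] at hac ⊢
    exact ⟨h1 (Finset.mem_coe.mpr ha.1.1) (Finset.mem_coe.mpr hc.1.1) hac.1,
           h1 (Finset.mem_coe.mpr ha.1.2) (Finset.mem_coe.mpr hc.1.2) hac.2⟩
  · rintro ⟨a, b⟩ hq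
    simp only [mem_filter, mem_product, mem_image] at hq
    obtain ⟨⟨⟨a₀, ha₀, rfl⟩, ⟨b₀, hb₀, rfl⟩⟩, hcond⟩ := hq
    exact ⟨(a₀, b₀), by simp only [mem_filter, mem_product]; exact ⟨⟨ha₀, hb₀⟩, hcond⟩, rfl⟩

/-- sorting the pairs in the inversion count. -/
lemma inv2_sorted {r : V → ℕ} {r' : W → ℕ} {r'' : X → ℕ}
    (hr : Function.Injective r) (hr' : Function.Injective r')
    {f₁ : V → W} {f₂ : W → X} {s : Finset V} (h1 : Set.InjOn f₁ ↑s) :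
    ((s ×ˢ s).filter fun q =>
        r' (f₁ q.1) < r' (f₁ q.2) ∧ r'' (f₂ (f₁ q.2)) < r'' (f₂ (f₁ q.1))).card
      = ((s ×ˢ s).filter fun q => r q.1 < r q.2 ∧
          (if r' (f₁ q.1) < r' (f₁ q.2) then r'' (f₂ (f₁ q.2)) < r'' (f₂ (f₁ q.1))
           else r'' (f₂ (f₁ q.1)) < r'' (f₂ (f₁ q.2)))).card := by
  apply card_bij (fun q _ => if r q.1 < r q.2 then q else (q.2, q.1))
  · rintro ⟨a, b⟩ hq
    simp only [mem_filter, mem_product] at hq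
    obtain ⟨⟨ha, hb⟩, hc1, hc2⟩ := hq
    have hne : a ≠ b := by
      intro h; rw [h] at hc1; exact absurd hc1 (lt_irrefl _)
    have hrne : r a ≠ r b := fun h => hne (hr h)
    by_cases hlt : r a < r b
    · simp only [if_pos hlt, mem_filter, mem_product]
      exact ⟨⟨ha, hb⟩, hlt, by rw [if_pos hc1]; exact hc2⟩
    · simp only [if_neg hlt, mem_filter, mem_product]
      refine ⟨⟨hb, ha⟩, by omega, ?_⟩
      rw [if_neg (lt_asymm hc1)]
      exact hc2
  · rintro ⟨a, b⟩ ha ⟨c, d⟩ hc hac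
    simp only [mem_filter, mem_product] at ha hc
    split_ifs at hac with g1 g2 g2 <;> simp only [Prod.mk.injEq] at hac
    · exact Prod.ext hac.1 hac.2
    · exfalso
      obtain ⟨rfl, rfl⟩ := hac
      exact absurd hc.2.1 (lt_asymm ha.2.1)
    · exfalso
      obtain ⟨rfl, rfl⟩ := hac
      exact absurd hc.2.1 (lt_asymm ha.2.1)
    · obtain ⟨rfl, rfl⟩ := hac
      rfl
  · rintro ⟨c, d⟩ hq
    simp only [mem_filter, mem_product] at hq
    obtain ⟨⟨hcs, hds⟩, hlt, hcond⟩ := hq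
    have hne : c ≠ d := fun h => by rw [h] at hlt; exact absurd hlt (lt_irrefl _)
    have hfne : r' (f₁ c) ≠ r' (f₁ d) := fun h =>
      hne (h1 (Finset.mem_coe.mpr hcs) (Finset.mem_coe.mpr hds) (hr' h))
    by_cases hcc : r' (f₁ c) < r' (f₁ d)
    · refine ⟨(c, d), ?_, ?_⟩
      · simp only [mem_filter, mem_product]
        rw [if_pos hcc] at hcond
        exact ⟨⟨hcs, hds⟩, hcc, hcond⟩
      · simp only [if_pos hlt]
    · refine ⟨(d, c), ?_, ?_⟩
      · simp only [mem_filter, mem_product]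
        rw [if_neg hcc] at hcond
        exact ⟨⟨hds, hcs⟩, by omega, hcond⟩
      · simp only [if_neg (lt_asymm hlt)]

/-- D1 : composition law for `mapSign`. -/
lemma mapSign_comp {r : V → ℕ} {r' : W → ℕ} {r'' : X → ℕ}
    (hr : Function.Injective r) (hr' : Function.Injective r') (hr'' : Function.Injective r'')
    {f₁ : V → W} {f₂ : W → X} {s : Finset V}
    (h1 : Set.InjOn f₁ ↑s) (h2 : Set.InjOn f₂ ↑(s.image f₁)) :
    mapSign r r'' (f₂ ∘ f₁) s = mapSign r r' f₁ s * mapSign r' r'' f₂ (s.image f₁) := by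
  rw [mapSign_eq, mapSign_eq, mapSign_eq, ← pow_add]
  apply neg_one_pow_congr
  rw [eq_comm]
  have hC := (inv2_image (r'' := r'') (f₂ := f₂) h1).trans (inv2_sorted hr hr' h1)
  rw [hC]
  unfold inv2
  apply card_filter_xor
  rintro ⟨a, b⟩ hab
  rw [mem_product] at hab
  have hfa : f₁ a ∈ ↑(s.image f₁) := Finset.mem_coe.mpr (mem_image_of_mem _ hab.1)
  have hfb : f₁ b ∈ ↑(s.image f₁) := Finset.mem_coe.mpr (mem_image_of_mem _ hab.2)
  by_cases hne : a = b
  · subst hne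
    simp only [Function.comp_apply]
    by_cases hcc : r' (f₁ a) < r' (f₁ a)
    · rw [if_pos hcc]; omega
    · rw [if_neg hcc]; omega
  · have e1 : r a ≠ r b := fun h => hne (hr h)
    have e2 : r' (f₁ a) ≠ r' (f₁ b) := fun h =>
      hne (h1 (Finset.mem_coe.mpr hab.1) (Finset.mem_coe.mpr hab.2) (hr' h))
    have e3 : r'' (f₂ (f₁ a)) ≠ r'' (f₂ (f₁ b)) := fun h =>
      hne (h1 (Finset.mem_coe.mpr hab.1) (Finset.mem_coe.mpr hab.2) (h2 hfa hfb (hr'' h)))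
    simp only [Function.comp_apply]
    by_cases hcc : r' (f₁ a) < r' (f₁ b)
    · rw [if_pos hcc]; omega
    · rw [if_neg hcc]; omega
end Counting2
end MatchProof
end
noncomputable section
namespace MatchProof
open MatchPaper Finset
set_option linter.unusedSectionVars false

attribute [local instance 10] Classical.propDecidable

section Counting3
variable {V W : Type*} [DecidableEq V] [DecidableEq W]

lemma filter_image_card {r' : W → ℕ} {f : V → W} {s : Finset V} (hf : Set.InjOn f ↑s)
    (w : W) :
    ((s.image f).filter fun u => r' u < r' w).card
      = (s.filter fun u => r' (f u) < r' w).card := by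
  rw [eq_comm]
  apply card_bij (fun u _ => f u)
  · intro u hu
    simp only [mem_filter] at hu ⊢
    exact ⟨mem_image_of_mem _ hu.1, hu.2⟩
  · intro u hu u' hu' huu
    simp only [mem_filter] at hu hu'
    exact hf (Finset.mem_coe.mpr hu.1) (Finset.mem_coe.mpr hu'.1) huu
  · intro w' hw'
    simp only [mem_filter, mem_image] at hw'
    obtain ⟨⟨u, hu, rfl⟩, hc⟩ := hw'
    exact ⟨u, by simp only [mem_filter]; exact ⟨hu, hc⟩, rfl⟩

/-- D2 : the boundary/chain-map sign compatibility. -/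
lemma sign_erase_rel {r : V → ℕ} {r' : W → ℕ} (hr : Function.Injective r)
    (hr' : Function.Injective r') {f : V → W} {s : Finset V}
    (hf : Set.InjOn f ↑s) {p : V} (hp : p ∈ s) :
    (-1 : ℤ) ^ (s.filter fun u => r u < r p).card * mapSign r r' f (s.erase p)
      = mapSign r r' f s * (-1 : ℤ) ^ ((s.image f).filter fun w => r' w < r' (f p)).card := by
  have hD0 := inv2_erase (r := r) (r' := r') (f := f) hp
  have hb := filter_image_card (r' := r') hf (f p)
  have hpos : (s.filter fun u => r u < r p).card
      = (s.filter fun u => r u < r p ∧ r' (f p) < r' (f u)).card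
        + (s.filter fun u => r u < r p ∧ r' (f u) < r' (f p)).card := by
    rw [card_filter, card_filter, card_filter, ← Finset.sum_add_distrib]
    apply Finset.sum_congr rfl
    intro u hu
    by_cases hup : u = p
    · subst hup; split_ifs <;> omega
    · have hne : r' (f u) ≠ r' (f p) := fun h =>
        hup (hf (Finset.mem_coe.mpr hu) (Finset.mem_coe.mpr hp) (hr' h))
      split_ifs <;> omega
  have hbx : (s.filter fun u => r' (f u) < r' (f p)).card
      = (s.filter fun v => r p < r v ∧ r' (f v) < r' (f p)).card
        + (s.filter fun u => r u < r p ∧ r' (f u) < r' (f p)).card := by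
    rw [card_filter, card_filter, card_filter, ← Finset.sum_add_distrib]
    apply Finset.sum_congr rfl
    intro u hu
    by_cases hup : u = p
    · subst hup; split_ifs <;> omega
    · have hne : r u ≠ r p := fun h => hup (hr h)
      split_ifs <;> omega
  rw [mapSign_eq, mapSign_eq, hb, ← pow_add, ← pow_add]
  apply neg_one_pow_congr
  omega

/-- D3 : the cancellation sign identity. -/
lemma sign_cancel {r : V → ℕ} {r' : W → ℕ} (hr : Function.Injective r)
    (hr' : Function.Injective r') {f : V → W} {s : Finset V} {p q : V}
    (hp : p ∈ s) (hq : q ∈ s) (hpq : p ≠ q) (hfpq : f p = f q)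
    (huniq : ∀ u ∈ s, u ≠ p → u ≠ q → f u ≠ f p) :
    (-1 : ℤ) ^ (s.filter fun u => r u < r p).card * mapSign r r' f (s.erase p)
      = - ((-1 : ℤ) ^ (s.filter fun u => r u < r q).card * mapSign r r' f (s.erase q)) := by
  have hD0p := inv2_erase (r := r) (r' := r') (f := f) hp
  have hD0q := inv2_erase (r := r) (r' := r') (f := f) hq
  set F : V → ℕ := fun u =>
      ((if r u < r p then 1 else 0) + (if r u < r q then 1 else 0))
      + (((if r u < r p ∧ r' (f p) < r' (f u) then 1 else 0)
        + (if r p < r u ∧ r' (f u) < r' (f p) then 1 else 0))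
      + ((if r u < r q ∧ r' (f q) < r' (f u) then 1 else 0)
        + (if r q < r u ∧ r' (f u) < r' (f q) then 1 else 0))) with hF
  have hsum : (s.filter fun u => r u < r p).card + (s.filter fun u => r u < r q).card
      + ((s.filter fun u => r u < r p ∧ r' (f p) < r' (f u)).card
        + (s.filter fun v => r p < r v ∧ r' (f v) < r' (f p)).card
        + ((s.filter fun u => r u < r q ∧ r' (f q) < r' (f u)).card
        + (s.filter fun v => r q < r v ∧ r' (f v) < r' (f q)).card))
      = ∑ u ∈ s, F u := by
    simp only [hF]
    rw [card_filter, card_filter, card_filter, card_filter, card_filter, card_filter]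
    rw [← Finset.sum_add_distrib, ← Finset.sum_add_distrib, ← Finset.sum_add_distrib,
        ← Finset.sum_add_distrib, ← Finset.sum_add_distrib]
  have hq' : q ∈ s.erase p := mem_erase.mpr ⟨fun h => hpq h.symm, hq⟩
  have hsplit : ∑ u ∈ s, F u = F p + (F q + ∑ u ∈ (s.erase p).erase q, F u) := by
    rw [Finset.add_sum_erase _ F hq', Finset.add_sum_erase _ F hp]
  have hr'eq : r' (f p) = r' (f q) := by rw [hfpq]
  have hFpq : (F p + F q) % 2 = 1 := by
    have h1 : r p ≠ r q := fun h => hpq (hr h)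
    simp only [hF]
    split_ifs <;> omega
  have hrest : (∑ u ∈ (s.erase p).erase q, F u) % 2 = 0 := by
    rw [Finset.sum_nat_mod]
    have : ∀ u ∈ (s.erase p).erase q, F u % 2 = 0 := by
      intro u hu
      have hu1 : u ≠ q := (mem_erase.mp hu).1
      have hu2 : u ≠ p := (mem_erase.mp (mem_erase.mp hu).2).1
      have hus : u ∈ s := mem_of_mem_erase (mem_of_mem_erase hu)
      have hfu : f u ≠ f p := huniq u hus hu2 hu1
      have e1 : r' (f u) ≠ r' (f p) := fun h => hfu (hr' h)
      have e2 : r' (f u) ≠ r' (f q) := by rw [← hfpq]; exact e1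
      have e3 : r u ≠ r p := fun h => hu2 (hr h)
      have e4 : r u ≠ r q := fun h => hu1 (hr h)
      simp only [hF]
      split_ifs <;> omega
    rw [Finset.sum_congr rfl this]
    simp
  have hodd : ((s.filter fun u => r u < r p).card + inv2 r r' f (s.erase p)
      + ((s.filter fun u => r u < r q).card + inv2 r r' f (s.erase q))) % 2 = 1 := by
    omega
  rw [mapSign_eq, mapSign_eq, ← pow_add, ← pow_add]
  set a := (s.filter fun u => r u < r p).card + inv2 r r' f (s.erase p) with ha
  set b := (s.filter fun u => r u < r q).card + inv2 r r' f (s.erase q) with hb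
  have hab : (-1 : ℤ) ^ a * (-1 : ℤ) ^ b = -1 := by
    rw [← pow_add]
    exact Odd.neg_one_pow (Nat.odd_iff.mpr (by omega))
  have hbb : (-1 : ℤ) ^ b * (-1 : ℤ) ^ b = 1 := by
    rw [← pow_add]
    exact Even.neg_one_pow ⟨_, rfl⟩
  calc (-1 : ℤ) ^ a = (-1 : ℤ) ^ a * ((-1 : ℤ) ^ b * (-1 : ℤ) ^ b) := by rw [hbb, mul_one]
    _ = ((-1 : ℤ) ^ a * (-1 : ℤ) ^ b) * (-1 : ℤ) ^ b := by ring
    _ = -1 * (-1 : ℤ) ^ b := by rw [hab]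
    _ = -((-1 : ℤ) ^ b) := by ring
end Counting3
end MatchProof
end
noncomputable section
namespace MatchProof
open MatchPaper Finset
set_option linter.unusedSectionVars false

attribute [local instance 10] Classical.propDecidable

section ChainLemmas
variable {V W : Type*} [DecidableEq V] [DecidableEq W]

lemma basisOrZero_pos (K : Finset V → Prop) (c : ℕ) {τ : Finset V} (h : K τ ∧ τ.card = c) :
    basisOrZero ℤ K c τ = Finsupp.single ⟨τ, h⟩ (1 : ℤ) := by
  unfold basisOrZero; rw [dif_pos h]

lemma basisOrZero_neg (K : Finset V → Prop) (c : ℕ) {τ : Finset V}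
    (h : ¬ (K τ ∧ τ.card = c)) : basisOrZero ℤ K c τ = 0 := by
  unfold basisOrZero; rw [dif_neg h]

lemma chainMap_single (rank : V → ℕ) (rank' : W → ℕ) (f : V → W)
    (K : Finset V → Prop) (K' : Finset W → Prop) (c : ℕ)
    (σ : {σ : Finset V // K σ ∧ σ.card = c}) (x : ℤ) :
    chainMap ℤ rank rank' f K K' c (Finsupp.single σ x)
      = x • (mapSign rank rank' f σ.1 • basisOrZero ℤ K' c (σ.1.image f)) := by
  unfold chainMap
  rw [Finsupp.lsum_single, LinearMap.toSpanSingleton_apply]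

lemma bdry_single (rank : V → ℕ) (K : Finset V → Prop) (c : ℕ)
    (σ : {σ : Finset V // K σ ∧ σ.card = c + 1}) (x : ℤ) :
    bdry ℤ rank K c (Finsupp.single σ x)
      = x • ∑ v ∈ σ.1, ((-1 : ℤ) ^ ((σ.1.filter fun u => rank u < rank v).card) •
          basisOrZero ℤ K c (σ.1.erase v)) := by
  unfold bdry
  rw [Finsupp.lsum_single, LinearMap.toSpanSingleton_apply]

lemma image_erase_injOn {f : V → W} {s : Finset V} (hf : Set.InjOn f ↑s) {p : V}
    (hp : p ∈ s) : (s.erase p).image f = (s.image f).erase (f p) := by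
  ext w
  simp only [mem_image, mem_erase]
  constructor
  · rintro ⟨u, hu, rfl⟩
    obtain ⟨hup, hus⟩ := hu
    exact ⟨fun h => hup (hf (Finset.mem_coe.mpr hus) (Finset.mem_coe.mpr hp) h), u, hus, rfl⟩
  · rintro ⟨hw, u, hus, rfl⟩
    exact ⟨u, ⟨fun h => hw (by rw [h]), hus⟩, rfl⟩

/-- CM : chain maps commute with the boundary on a face with injective vertex map. -/
lemma chainMap_bdry_single (r : V → ℕ) (r' : W → ℕ)
    (hr : Function.Injective r) (hr' : Function.Injective r')
    (f : V → W) (K : Finset V → Prop) (K' : Finset W → Prop) (c : ℕ)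
    (σ : Finset V) (h : K σ ∧ σ.card = c + 1)
    (hinj : Set.InjOn f ↑σ)
    (hK' : K' (σ.image f))
    (hiff : ∀ p ∈ σ, K (σ.erase p) ↔ K' ((σ.erase p).image f)) :
    chainMap ℤ r r' f K K' c (bdry ℤ r K c (Finsupp.single ⟨σ, h⟩ 1))
      = bdry ℤ r' K' c (chainMap ℤ r r' f K K' (c + 1) (Finsupp.single ⟨σ, h⟩ 1)) := by
  have hcard : (σ.image f).card = c + 1 := (Finset.card_image_iff.mpr hinj).trans h.2
  have hcv : ∀ v ∈ σ, (σ.erase v).card = c := by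
    intro v hv
    rw [card_erase_of_mem hv, h.2]
    omega
  rw [bdry_single, one_smul, map_sum, chainMap_single, one_smul,
      basisOrZero_pos K' (c + 1) ⟨hK', hcard⟩, map_smul,
      bdry_single, one_smul, smul_sum]
  rw [Finset.sum_image (fun x hx y hy hxy =>
        hinj (Finset.mem_coe.mpr hx) (Finset.mem_coe.mpr hy) hxy)]
  apply Finset.sum_congr rfl
  intro v hv
  rw [← image_erase_injOn hinj hv, map_smul]
  by_cases hKv : K (σ.erase v)
  · rw [basisOrZero_pos K c ⟨hKv, hcv v hv⟩, chainMap_single, one_smul,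
        smul_smul, smul_smul]
    congr 1
    simpa using sign_erase_rel hr hr' hinj hv
  · rw [basisOrZero_neg K c (fun hc => hKv hc.1), map_zero, smul_zero,
        basisOrZero_neg K' c (fun hc => hKv ((hiff v hv).mpr hc.1)), smul_zero, smul_zero]
end ChainLemmas
end MatchProof
end
noncomputable section
namespace MatchProof
open MatchPaper Finset
set_option linter.unusedSectionVars false

section Faces
variable {N n : ℕ} {kap : Fin N → Fin n} {lam : Fin n → ℕ}

def Vset (σ : Finset (Fin N × Fin N)) : Finset (Fin N) :=
  σ.biUnion fun p => {p.1, p.2}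

lemma mem_Vset {σ : Finset (Fin N × Fin N)} {x : Fin N} :
    x ∈ Vset σ ↔ ∃ p ∈ σ, x = p.1 ∨ x = p.2 := by
  simp only [Vset, mem_biUnion, mem_insert, mem_singleton]

lemma pair_filter_card {α : Type*} [DecidableEq α] {a b : α} (hab : a ≠ b)
    (P : α → Prop) [DecidablePred P] :
    (({a, b} : Finset α).filter P).card
      = (if P a then 1 else 0) + (if P b then 1 else 0) := by
  rw [filter_insert, filter_singleton]
  by_cases ha : P a <;> by_cases hb : P b <;> simp [ha, hb, hab]

lemma count_used {σ : Finset (Fin N × Fin N)} (hM : IsMatching N σ)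
    (hinj : Set.InjOn (kmap kap) ↑σ) (i : Fin n) :
    ((Vset σ).filter fun x => kap x = i).card = degB (σ.image (kmap kap)) i := by
  rw [Vset, filter_biUnion, card_biUnion, degB,
      Finset.sum_image (fun x hx y hy hxy =>
        hinj (Finset.mem_coe.mpr hx) (Finset.mem_coe.mpr hy) hxy)]
  · apply Finset.sum_congr rfl
    intro p hp
    have hne : p.1 ≠ p.2 := ne_of_lt (hM.1 p hp)
    rw [pair_filter_card hne]
    unfold kmap
    rcases le_total (kap p.1) (kap p.2) with h | h
    · rw [min_eq_left h, max_eq_right h]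
    · rw [min_eq_right h, max_eq_left h, add_comm]
  · intro p hp q hq hpq
    rw [Function.onFun_apply, disjoint_left]
    intro z hzp hzq
    rw [mem_filter] at hzp hzq
    have h1 : z = p.1 ∨ z = p.2 := by
      rcases mem_insert.mp hzp.1 with h | h
      · exact Or.inl h
      · exact Or.inr (mem_singleton.mp h)
    have h2 : z = q.1 ∨ z = q.2 := by
      rcases mem_insert.mp hzq.1 with h | h
      · exact Or.inl h
      · exact Or.inr (mem_singleton.mp h)
    exact hpq (matching_endpoint_unique hM hp hq h1 h2)

lemma isBD_image (hcard : ∀ i, ((univ : Finset (Fin N)).filter fun x => kap x = i).card = lam i)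
    {σ : Finset (Fin N × Fin N)} (hM : IsMatching N σ) (hinj : Set.InjOn (kmap kap) ↑σ) :
    IsBDGraph lam (σ.image (kmap kap)) := by
  constructor
  · intro w hw
    obtain ⟨p, hp, rfl⟩ := mem_image.mp hw
    exact min_le_max
  · intro i
    rw [← count_used hM hinj i, ← hcard i]
    exact card_le_card (filter_subset_filter _ (subset_univ _))

lemma delta_card_image {σ : Finset (Fin N × Fin N)} (hd : InDelta kap σ) :
    (σ.image (kmap kap)).card < σ.card := by
  rcases lt_or_eq_of_le (Finset.card_image_le (f := kmap kap) (s := σ)) with h | h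
  · exact h
  · exfalso
    obtain ⟨p, hp, q, hq, hpq, hk⟩ := inDelta_iff.mp hd
    exact hpq (Finset.card_image_iff.mp h (Finset.mem_coe.mpr hp) (Finset.mem_coe.mpr hq) hk)

lemma basisOrZero_delta_image {σ : Finset (Fin N × Fin N)} (hd : InDelta kap σ) {c : ℕ}
    (hc : σ.card = c) :
    basisOrZero ℤ (IsBDGraph lam) c (σ.image (kmap kap)) = 0 := by
  apply basisOrZero_neg
  rintro ⟨-, hcc⟩
  have := delta_card_image (kap := kap) hd
  omega

/-- κ ∘ ∂ vanishes on Δ faces. -/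
lemma kappa_bdry_delta {σ : Finset (Fin N × Fin N)} (hσM : IsMatching N σ)
    (hσd : InDelta kap σ) {c : ℕ} (hc : σ.card = c + 1) :
    chainMap ℤ (rankP N) (rankP n) (kmap kap) (IsMatching N) (IsBDGraph lam) c
      (bdry ℤ (rankP N) (IsMatching N) c (Finsupp.single ⟨σ, hσM, hc⟩ 1)) = 0 := by
  rw [bdry_single, one_smul, map_sum]
  obtain ⟨p, hp, q, hq, hpq, hk⟩ := inDelta_iff.mp hσd
  have hterm0 : ∀ v ∈ σ, InDelta kap (σ.erase v) →
      chainMap ℤ (rankP N) (rankP n) (kmap kap) (IsMatching N) (IsBDGraph lam) c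
        ((-1 : ℤ) ^ ((σ.filter fun u => rankP N u < rankP N v).card) •
          basisOrZero ℤ (IsMatching N) c (σ.erase v)) = 0 := by
    intro v hv hdv
    rw [map_smul, basisOrZero_pos (IsMatching N) c
        ⟨isMatching_erase hσM v, by rw [card_erase_of_mem hv, hc]; omega⟩,
      chainMap_single, one_smul,
      basisOrZero_delta_image hdv (by rw [card_erase_of_mem hv, hc]; omega), smul_zero, smul_zero]
  by_cases huniq : ∀ u ∈ σ, u ≠ p → u ≠ q → kmap kap u ≠ kmap kap p
  · -- only collision is {p, q}; the two corresponding terms cancel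
    have hq' : q ∈ σ.erase p := mem_erase.mpr ⟨fun h => hpq h.symm, hq⟩
    rw [← Finset.add_sum_erase _ _ hp, ← Finset.add_sum_erase _ _ hq']
    have hrest : ∀ v ∈ (σ.erase p).erase q,
        chainMap ℤ (rankP N) (rankP n) (kmap kap) (IsMatching N) (IsBDGraph lam) c
          ((-1 : ℤ) ^ ((σ.filter fun u => rankP N u < rankP N v).card) •
            basisOrZero ℤ (IsMatching N) c (σ.erase v)) = 0 := by
      intro v hv
      have hv1 : v ≠ q := (mem_erase.mp hv).1
      have hv2 : v ≠ p := (mem_erase.mp (mem_erase.mp hv).2).1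
      have hvs : v ∈ σ := mem_of_mem_erase (mem_of_mem_erase hv)
      apply hterm0 v hvs
      exact inDelta_iff.mpr ⟨p, mem_erase.mpr ⟨fun h => hv2 h.symm, hp⟩,
        q, mem_erase.mpr ⟨fun h => hv1 h.symm, hq⟩, hpq, hk⟩
    rw [Finset.sum_congr rfl hrest, Finset.sum_const_zero, add_zero]
    -- now the two terms
    have hcp : (σ.erase p).card = c := by rw [card_erase_of_mem hp, hc]; omega
    have hcq : (σ.erase q).card = c := by rw [card_erase_of_mem hq, hc]; omega
    rw [map_smul, map_smul,
        basisOrZero_pos (IsMatching N) c ⟨isMatching_erase hσM p, hcp⟩,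
        basisOrZero_pos (IsMatching N) c ⟨isMatching_erase hσM q, hcq⟩,
        chainMap_single, chainMap_single, one_smul, one_smul]
    have himg : (σ.erase p).image (kmap kap) = (σ.erase q).image (kmap kap) := by
      ext w
      simp only [mem_image, mem_erase]
      constructor
      · rintro ⟨u, ⟨hup, hus⟩, rfl⟩
        by_cases huq : u = q
        · subst huq
          exact ⟨p, ⟨hpq, hp⟩, hk⟩
        · exact ⟨u, ⟨huq, hus⟩, rfl⟩
      · rintro ⟨u, ⟨huq, hus⟩, rfl⟩
        by_cases hup : u = p
        · subst hup
          exact ⟨q, ⟨fun h => hpq h.symm, hq⟩, hk.symm⟩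
        · exact ⟨u, ⟨hup, hus⟩, rfl⟩
    rw [himg, smul_smul, smul_smul, ← add_smul]
    have hcancel := sign_cancel (rankP_injective N) (rankP_injective n) hp hq hpq hk huniq
    rw [hcancel, neg_add_cancel, zero_smul]
  · -- some other collision exists: every erase is still in Δ
    push_neg at huniq
    obtain ⟨u, hu, hu1, hu2, hk2⟩ := huniq
    apply Finset.sum_eq_zero
    intro v hv
    apply hterm0 v hv
    rw [inDelta_iff]
    by_cases hvp : v = p
    · subst hvp
      exact ⟨u, mem_erase.mpr ⟨hu1, hu⟩, q,
        mem_erase.mpr ⟨fun h => hpq h.symm, hq⟩, hu2, hk2.trans hk⟩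
    · by_cases hvq : v = q
      · subst hvq
        exact ⟨u, mem_erase.mpr ⟨hu2, hu⟩, p,
          mem_erase.mpr ⟨hpq, hp⟩, hu1, hk2⟩
      · exact ⟨p, mem_erase.mpr ⟨fun h => hvp h.symm, hp⟩,
          q, mem_erase.mpr ⟨fun h => hvq h.symm, hq⟩, hpq, hk⟩
end Faces
end MatchProof
end
noncomputable section
namespace MatchProof
open MatchPaper Finset
set_option linter.unusedSectionVars false

section Lift
variable {N n : ℕ} {kap : Fin N → Fin n} {lam : Fin n → ℕ}

lemma degB_mono {σ τ : Finset (Fin n × Fin n)} (h : σ ⊆ τ) (i : Fin n) :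
    degB σ i ≤ degB τ i :=
  Finset.sum_le_sum_of_subset h

lemma isBD_subset {τ' τ : Finset (Fin n × Fin n)} (h : τ' ⊆ τ) (hτ : IsBDGraph lam τ) :
    IsBDGraph lam τ' :=
  ⟨fun p hp => hτ.1 p (h hp), fun i => le_trans (degB_mono h i) (hτ.2 i)⟩

lemma isMatching_empty : IsMatching N (∅ : Finset (Fin N × Fin N)) :=
  ⟨fun p hp => absurd hp (notMem_empty p), fun p hp => absurd hp (notMem_empty p)⟩

lemma isGamma_empty : IsGamma kap (∅ : Finset (Fin N × Fin N)) := by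
  refine ⟨isMatching_empty, ?_⟩
  rintro ⟨p, hp, -⟩
  exact notMem_empty p hp

lemma exists_gamma_lift
    (hcard : ∀ i, ((univ : Finset (Fin N)).filter fun x => kap x = i).card = lam i)
    (τ : Finset (Fin n × Fin n)) : IsBDGraph lam τ →
      ∃ σ : Finset (Fin N × Fin N),
        IsGamma kap σ ∧ σ.image (kmap kap) = τ ∧ σ.card = τ.card := by
  induction τ using Finset.strongInduction with
  | _ τ ih =>
    intro hτ
    rcases τ.eq_empty_or_nonempty with rfl | ⟨e, he⟩
    · exact ⟨∅, isGamma_empty, by simp, by simp⟩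
    · have hsub : τ.erase e ⊂ τ := erase_ssubset he
      obtain ⟨σ', hσ'Γ, hσ'img, hσ'card⟩ := ih (τ.erase e) hsub
        (isBD_subset (erase_subset e τ) hτ)
      have hused : ∀ i, ((Vset σ').filter fun x => kap x = i).card = degB (τ.erase e) i := by
        intro i
        rw [← hσ'img]
        exact count_used hσ'Γ.1 (gamma_injOn hσ'Γ) i
      have hsplit : ∀ i, lam i = degB (τ.erase e) i +
          (((univ : Finset (Fin N)).filter fun x => kap x = i).filter
            fun x => ¬ x ∈ Vset σ').card := by
        intro i
        rw [← hcard i,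
            ← card_filter_add_card_filter_not
              (s := (univ : Finset (Fin N)).filter fun x => kap x = i)
              (fun x => x ∈ Vset σ')]
        congr 1
        rw [← hused i]
        congr 1
        ext x
        simp only [mem_filter, mem_univ, true_and]
        tauto
      have hdeg : degB τ e.1 = ((if e.1 = e.1 then 1 else 0) + (if e.2 = e.1 then 1 else 0))
          + degB (τ.erase e) e.1 := by
        unfold degB
        exact (Finset.add_sum_erase τ _ he).symm
      have hdeg2 : degB τ e.2 = ((if e.1 = e.2 then 1 else 0) + (if e.2 = e.2 then 1 else 0))
          + degB (τ.erase e) e.2 := by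
        unfold degB
        exact (Finset.add_sum_erase τ _ he).symm
      -- obtain fresh vertices x, y
      have hxy : ∃ x y : Fin N, kap x = e.1 ∧ kap y = e.2 ∧ x ∉ Vset σ' ∧ y ∉ Vset σ'
          ∧ x ≠ y := by
        by_cases he12 : e.2 = e.1
        · have hb := hτ.2 e.1
          have hs := hsplit e.1
          rw [hdeg, if_pos rfl, if_pos he12] at hb
          have h2 : 1 < (((univ : Finset (Fin N)).filter fun x => kap x = e.1).filter
              fun x => ¬ x ∈ Vset σ').card := by omega
          obtain ⟨x, hx, y, hy, hxy⟩ := Finset.one_lt_card.mp h2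
          rw [mem_filter, mem_filter] at hx hy
          exact ⟨x, y, hx.1.2, by rw [hy.1.2, he12], hx.2, hy.2, hxy⟩
        · have hb1 := hτ.2 e.1
          have hb2 := hτ.2 e.2
          have hs1 := hsplit e.1
          have hs2 := hsplit e.2
          rw [hdeg, if_pos rfl, if_neg he12] at hb1
          rw [hdeg2, if_neg (fun h => he12 h.symm), if_pos rfl] at hb2
          have h1 : 0 < (((univ : Finset (Fin N)).filter fun x => kap x = e.1).filter
              fun x => ¬ x ∈ Vset σ').card := by omega
          have h2 : 0 < (((univ : Finset (Fin N)).filter fun x => kap x = e.2).filter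
              fun x => ¬ x ∈ Vset σ').card := by omega
          obtain ⟨x, hx⟩ := Finset.card_pos.mp h1
          obtain ⟨y, hy⟩ := Finset.card_pos.mp h2
          rw [mem_filter, mem_filter] at hx hy
          refine ⟨x, y, hx.1.2, hy.1.2, hx.2, hy.2, ?_⟩
          intro hxy
          apply he12
          rw [← hy.1.2, ← hxy, hx.1.2]
      obtain ⟨x, y, hx, hy, hxV, hyV, hxyne⟩ := hxy
      set pe : Fin N × Fin N := (min x y, max x y) with hpe
      have hkpe : kmap kap pe = e := by
        have he' : e.1 ≤ e.2 := hτ.1 e he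
        have : kmap kap pe = (min (kap x) (kap y), max (kap x) (kap y)) := by
          rcases le_total x y with h | h
          · simp [hpe, kmap, min_eq_left h, max_eq_right h]
          · simp [hpe, kmap, min_eq_right h, max_eq_left h, min_comm, max_comm]
        rw [this, hx, hy, min_eq_left he', max_eq_right he']
      have hq1V : ∀ q ∈ σ', q.1 ∈ Vset σ' := fun q hq => mem_Vset.mpr ⟨q, hq, Or.inl rfl⟩
      have hq2V : ∀ q ∈ σ', q.2 ∈ Vset σ' := fun q hq => mem_Vset.mpr ⟨q, hq, Or.inr rfl⟩
      have hpe1 : pe.1 = x ∨ pe.1 = y := min_choice x y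
      have hpe2 : pe.2 = x ∨ pe.2 = y := max_choice x y
      have hfresh1 : ∀ z ∈ Vset σ', pe.1 ≠ z := by
        intro z hz
        rcases hpe1 with h | h <;> rw [h] <;> rintro rfl
        · exact hxV hz
        · exact hyV hz
      have hfresh2 : ∀ z ∈ Vset σ', pe.2 ≠ z := by
        intro z hz
        rcases hpe2 with h | h <;> rw [h] <;> rintro rfl
        · exact hxV hz
        · exact hyV hz
      have hpeσ' : pe ∉ σ' := fun h => hfresh1 pe.1 (hq1V pe h) rfl
      refine ⟨insert pe σ', ⟨⟨?_, ?_⟩, ?_⟩, ?_, ?_⟩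
      · intro p hp
        rcases mem_insert.mp hp with rfl | hp'
        · exact min_lt_max.mpr hxyne
        · exact hσ'Γ.1.1 p hp'
      · intro p hp q hq hne
        rcases mem_insert.mp hp with rfl | hp' <;> rcases mem_insert.mp hq with rfl | hq'
        · exact absurd rfl hne
        · exact ⟨hfresh1 _ (hq1V q hq'), hfresh1 _ (hq2V q hq'),
                 hfresh2 _ (hq1V q hq'), hfresh2 _ (hq2V q hq')⟩
        · exact ⟨(hfresh1 _ (hq1V p hp')).symm, (hfresh2 _ (hq1V p hp')).symm,
                 (hfresh1 _ (hq2V p hp')).symm, (hfresh2 _ (hq2V p hp')).symm⟩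
        · exact hσ'Γ.1.2 p hp' q hq' hne
      · rw [inDelta_iff]
        rintro ⟨u, hu, v, hv, huv, hk⟩
        rcases mem_insert.mp hu with rfl | hu' <;> rcases mem_insert.mp hv with rfl | hv'
        · exact huv rfl
        · have : kmap kap v = e := by rw [← hk, hkpe]
          have hmem : e ∈ τ.erase e := by
            rw [← hσ'img]
            rw [← this]
            exact mem_image_of_mem _ hv'
          exact absurd (mem_erase.mp hmem).1 (fun h => h rfl)
        · have : kmap kap u = e := by rw [hk, hkpe]
          have hmem : e ∈ τ.erase e := by
            rw [← hσ'img, ← this]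
            exact mem_image_of_mem _ hu'
          exact absurd (mem_erase.mp hmem).1 (fun h => h rfl)
        · exact hσ'Γ.2 (inDelta_iff.mpr ⟨u, hu', v, hv', huv, hk⟩)
      · rw [image_insert, hkpe, hσ'img, insert_erase he]
      · rw [card_insert_of_notMem hpeσ', hσ'card, card_erase_of_mem he]
        have : 0 < τ.card := card_pos.mpr ⟨e, he⟩
        omega
end Lift
end MatchProof
end
noncomputable section
namespace MatchProof
open MatchPaper Finset
set_option linter.unusedSectionVars false

section Perm
variable {N n : ℕ} {kap : Fin N → Fin n}

lemma extend_perm (A : Finset (Fin N)) (h : Fin N → Fin N)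
    (hinj : Set.InjOn h ↑A) (hkap : ∀ x ∈ A, kap (h x) = kap x) :
    ∃ g : Equiv.Perm (Fin N), KeepsBlocks kap g ∧ ∀ x ∈ A, g x = h x := by
  classical
  set B := A.image h with hB
  set C : Fin n → Finset (Fin N) :=
    fun i => (univ.filter fun x => kap x = i).filter fun x => ¬ x ∈ A with hC
  set D : Fin n → Finset (Fin N) :=
    fun i => (univ.filter fun x => kap x = i).filter fun x => ¬ x ∈ B with hD
  have hCD : ∀ i, (C i).card = (D i).card := by
    intro i
    have h1 : ((univ.filter fun x : Fin N => kap x = i).filter fun x => x ∈ B).card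
        = ((univ.filter fun x : Fin N => kap x = i).filter fun x => x ∈ A).card := by
      rw [eq_comm]
      apply card_bij (fun x _ => h x)
      · intro a ha
        simp only [mem_filter, mem_univ, true_and] at ha ⊢
        exact ⟨hkap a ha.2 ▸ ha.1, mem_image_of_mem h ha.2⟩
      · intro a ha a' ha' haa
        simp only [mem_filter, mem_univ, true_and] at ha ha'
        exact hinj (Finset.mem_coe.mpr ha.2) (Finset.mem_coe.mpr ha'.2) haa
      · intro b hb
        simp only [mem_filter, mem_univ, true_and] at hb
        obtain ⟨a, ha, rfl⟩ := mem_image.mp hb.2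
        refine ⟨a, ?_, rfl⟩
        simp only [mem_filter, mem_univ, true_and]
        exact ⟨(hkap a ha) ▸ hb.1, ha⟩
    have h2 := card_filter_add_card_filter_not
      (s := (univ : Finset (Fin N)).filter fun x => kap x = i) (fun x => x ∈ A)
    have h3 := card_filter_add_card_filter_not
      (s := (univ : Finset (Fin N)).filter fun x => kap x = i) (fun x => x ∈ B)
    simp only [hC, hD]
    omega
  have ee : ∀ i, {x // x ∈ C i} ≃ {x // x ∈ D i} := fun i => Finset.equivOfCardEq (hCD i)
  have hmemC : ∀ (x : Fin N), ¬ x ∈ A → x ∈ C (kap x) := by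
    intro x hx
    simp only [hC, mem_filter, mem_univ, true_and]
    exact hx
  set F : Fin N → Fin N := fun x =>
    if hx : x ∈ A then h x else (ee (kap x) ⟨x, hmemC x hx⟩ : _).1 with hF
  have hFA : ∀ x ∈ A, F x = h x := by
    intro x hx
    rw [hF]; simp only [dif_pos hx]
  have hFnA : ∀ (x : Fin N) (hx : ¬ x ∈ A), F x = (ee (kap x) ⟨x, hmemC x hx⟩ : _).1 := by
    intro x hx
    rw [hF]; simp only [dif_neg hx]
  have hDmem : ∀ (x : Fin N) (hx : ¬ x ∈ A), (F x) ∈ D (kap x) := by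
    intro x hx
    rw [hFnA x hx]
    exact (ee (kap x) ⟨x, hmemC x hx⟩).2
  have hFkap : ∀ x, kap (F x) = kap x := by
    intro x
    by_cases hx : x ∈ A
    · rw [hFA x hx]; exact hkap x hx
    · have := hDmem x hx
      simp only [hD, mem_filter, mem_univ, true_and] at this
      exact this.1
  have hFB : ∀ (x : Fin N), ¬ x ∈ A → F x ∉ B := by
    intro x hx
    have := hDmem x hx
    simp only [hD, mem_filter, mem_univ, true_and] at this
    exact this.2
  have hFinj : Function.Injective F := by
    intro x y hxy
    by_cases hx : x ∈ A <;> by_cases hy : y ∈ A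
    · apply hinj (Finset.mem_coe.mpr hx) (Finset.mem_coe.mpr hy)
      rw [hFA x hx, hFA y hy] at hxy
      exact hxy
    · exfalso
      apply hFB y hy
      rw [← hxy, hFA x hx]
      exact mem_image_of_mem h hx
    · exfalso
      apply hFB x hx
      rw [hxy, hFA y hy]
      exact mem_image_of_mem h hy
    · have hk : kap x = kap y := by
        have h1 := hFkap x; have h2 := hFkap y
        rw [← h1, ← h2, hxy]
      have e1 := hFnA x hx
      have e2 := hFnA y hy
      have hcongr : ∀ (i j : Fin n) (hij : i = j) (z : Fin N) (hz : z ∈ C i),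
          ((ee i ⟨z, hz⟩ : {w // w ∈ D i}) : Fin N)
            = ((ee j ⟨z, hij ▸ hz⟩ : {w // w ∈ D j}) : Fin N) := by
        intro i j hij z hz
        subst hij
        rfl
      have e2' : F y = ((ee (kap x) ⟨y, hk.symm ▸ hmemC y hy⟩ : {w // w ∈ D (kap x)}) : Fin N) := by
        rw [e2, hcongr (kap y) (kap x) hk.symm y (hmemC y hy)]
      rw [e1, e2'] at hxy
      have := (ee (kap x)).injective (Subtype.ext hxy)
      exact congrArg Subtype.val this
  refine ⟨Equiv.ofBijective F (Finite.injective_iff_bijective.mp hFinj), hFkap, hFA⟩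

lemma exists_perm {σ σ' : Finset (Fin N × Fin N)} (hσ : IsGamma kap σ) (hσ' : IsGamma kap σ')
    (himg : σ.image (kmap kap) = σ'.image (kmap kap)) :
    ∃ g : Equiv.Perm (Fin N), KeepsBlocks kap g ∧ σ.image (emap g) = σ' := by
  classical
  have hh : ∀ x ∈ Vset σ, ∃ y : Fin N,
      ∃ p ∈ σ, ∃ p' ∈ σ', (x = p.1 ∨ x = p.2) ∧ kmap kap p' = kmap kap p ∧
        ((kap p.1 = kap p.2 ∧ ((x = p.1 ∧ y = p'.1) ∨ (x ≠ p.1 ∧ y = p'.2)))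
        ∨ (kap p.1 ≠ kap p.2 ∧
            ((kap p'.1 = kap x ∧ y = p'.1) ∨ (kap p'.1 ≠ kap x ∧ y = p'.2)))) := by
    intro x hx
    obtain ⟨p, hp, hxp⟩ := mem_Vset.mp hx
    have : kmap kap p ∈ σ'.image (kmap kap) := by
      rw [← himg]; exact mem_image_of_mem _ hp
    obtain ⟨p', hp', hk⟩ := mem_image.mp this
    by_cases hbl : kap p.1 = kap p.2
    · by_cases hx1 : x = p.1
      · exact ⟨p'.1, p, hp, p', hp', hxp, hk, Or.inl ⟨hbl, Or.inl ⟨hx1, rfl⟩⟩⟩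
      · exact ⟨p'.2, p, hp, p', hp', hxp, hk, Or.inl ⟨hbl, Or.inr ⟨hx1, rfl⟩⟩⟩
    · by_cases hc : kap p'.1 = kap x
      · exact ⟨p'.1, p, hp, p', hp', hxp, hk, Or.inr ⟨hbl, Or.inl ⟨hc, rfl⟩⟩⟩
      · exact ⟨p'.2, p, hp, p', hp', hxp, hk, Or.inr ⟨hbl, Or.inr ⟨hc, rfl⟩⟩⟩
  choose h0 hspec using hh
  set h : Fin N → Fin N := fun x => if hx : x ∈ Vset σ then h0 x hx else x with hhdef
  have hhx : ∀ (x : Fin N) (hx : x ∈ Vset σ), h x = h0 x hx := by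
    intro x hx
    rw [hhdef]; simp only [dif_pos hx]
  -- the main per-edge description
  have hmain : ∀ p ∈ σ, ∃ p' ∈ σ', kmap kap p' = kmap kap p ∧
      ((h p.1 = p'.1 ∧ h p.2 = p'.2) ∨ (h p.1 = p'.2 ∧ h p.2 = p'.1)) := by
    intro p hp
    have hlt := hσ.1.1 p hp
    have hne : p.1 ≠ p.2 := ne_of_lt hlt
    have hx1 : p.1 ∈ Vset σ := mem_Vset.mpr ⟨p, hp, Or.inl rfl⟩
    have hx2 : p.2 ∈ Vset σ := mem_Vset.mpr ⟨p, hp, Or.inr rfl⟩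
    obtain ⟨q1, hq1, q1', hq1', hxq1, hk1, hcase1⟩ := hspec p.1 hx1
    obtain ⟨q2, hq2, q2', hq2', hxq2, hk2, hcase2⟩ := hspec p.2 hx2
    have hq1p : p = q1 := (matching_endpoint_unique hσ.1 hq1 hp hxq1 (Or.inl rfl)).symm
    subst hq1p
    have hq2p : p = q2 := (matching_endpoint_unique hσ.1 hq2 hp hxq2 (Or.inr rfl)).symm
    subst hq2p
    have hq12 : q1' = q2' := (gamma_injOn hσ' (Finset.mem_coe.mpr hq2')
      (Finset.mem_coe.mpr hq1') (by rw [hk1, hk2])).symm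
    subst hq12
    refine ⟨q1', hq1', hk1, ?_⟩
    rw [hhx p.1 hx1, hhx p.2 hx2]
    rcases hcase1 with ⟨hbl, hin⟩ | ⟨hbl, hin⟩ <;>
      rcases hcase2 with ⟨hbl2, hin2⟩ | ⟨hbl2, hin2⟩
    · rcases hin with ⟨-, hy1⟩ | ⟨hcon, -⟩
      · rcases hin2 with ⟨hcon, -⟩ | ⟨-, hy2⟩
        · exact absurd hcon.symm hne
        · exact Or.inl ⟨hy1, hy2⟩
      · exact absurd rfl hcon
    · exact absurd hbl hbl2
    · exact absurd hbl2 hbl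
    · rcases kmap_eq_iff.mp hk1 with ⟨e1, e2⟩ | ⟨e1, e2⟩
      · rcases hin with ⟨-, hy1⟩ | ⟨hcon, -⟩
        · rcases hin2 with ⟨hcon, -⟩ | ⟨-, hy2⟩
          · exact absurd (e1.symm.trans hcon) hbl
          · exact Or.inl ⟨hy1, hy2⟩
        · exact absurd e1 hcon
      · rcases hin with ⟨hcon, -⟩ | ⟨-, hy1⟩
        · exact absurd (hcon.symm.trans e1) hbl
        · rcases hin2 with ⟨-, hy2⟩ | ⟨hcon, -⟩
          · exact Or.inr ⟨hy1, hy2⟩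
          · exact absurd e1 hcon
  have hkapV : ∀ x ∈ Vset σ, kap (h x) = kap x := by
    intro x hx
    rw [hhx x hx]
    obtain ⟨p, hp, p', hp', hxp, hk, hcase⟩ := hspec x hx
    rcases kmap_eq_iff.mp hk with ⟨e1, e2⟩ | ⟨e1, e2⟩ <;>
      rcases hcase with ⟨hbl, hin⟩ | ⟨hbl, hin⟩ <;>
        rcases hin with ⟨h1, hy⟩ | ⟨h1, hy⟩ <;> rw [hy] <;> rcases hxp with h2 | h2 <;>
          simp_all
  have hEne : ∀ p' ∈ σ', p'.1 ≠ p'.2 := fun p' hp' => ne_of_lt (hσ'.1.1 p' hp')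
  have hinjV : Set.InjOn h ↑(Vset σ) := by
    intro x hx y hy hxy
    by_contra hne
    obtain ⟨px, hpx, hxor⟩ := mem_Vset.mp (Finset.mem_coe.mp hx)
    obtain ⟨py, hpy, hyor⟩ := mem_Vset.mp (Finset.mem_coe.mp hy)
    obtain ⟨px', hpx', hkx, hcx⟩ := hmain px hpx
    obtain ⟨py', hpy', hky, hcy⟩ := hmain py hpy
    by_cases hpp : px = py
    · subst hpp
      have hxypair : (x = px.1 ∧ y = px.2) ∨ (x = px.2 ∧ y = px.1) := by
        rcases hxor with rfl | rfl <;> rcases hyor with h3 | h3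
        · exact absurd h3.symm hne
        · exact Or.inl ⟨rfl, h3.symm ▸ rfl⟩
        · exact Or.inr ⟨rfl, h3.symm ▸ rfl⟩
        · exact absurd h3.symm hne
      have hd := hEne px' hpx'
      rcases hxypair with ⟨hx1, hy2⟩ | ⟨hx2, hy1⟩
      · rw [hx1, hy2] at hxy
        rcases hcx with ⟨a1, a2⟩ | ⟨a1, a2⟩ <;> rw [a1, a2] at hxy
        · exact hd hxy
        · exact hd hxy.symm
      · rw [hx2, hy1] at hxy
        rcases hcx with ⟨a1, a2⟩ | ⟨a1, a2⟩ <;> rw [a1, a2] at hxy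
        · exact hd hxy.symm
        · exact hd hxy
    · have hkne : kmap kap px ≠ kmap kap py := fun hkk =>
        hpp (gamma_injOn hσ (Finset.mem_coe.mpr hpx) (Finset.mem_coe.mpr hpy) hkk)
      have hpne : px' ≠ py' := fun hEE => hkne (by rw [← hkx, ← hky, hEE])
      obtain ⟨d1, d2, d3, d4⟩ := hσ'.1.2 px' hpx' py' hpy' hpne
      have hxmem : h x = px'.1 ∨ h x = px'.2 := by
        rcases hxor with h3 | h3 <;> rw [h3] <;>
          rcases hcx with ⟨a1, a2⟩ | ⟨a1, a2⟩ <;> simp [a1, a2]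
      have hymem : h y = py'.1 ∨ h y = py'.2 := by
        rcases hyor with h3 | h3 <;> rw [h3] <;>
          rcases hcy with ⟨a1, a2⟩ | ⟨a1, a2⟩ <;> simp [a1, a2]
      rcases hxmem with hxe | hxe <;> rcases hymem with hye | hye <;>
        rw [hxe, hye] at hxy
      · exact d1 hxy
      · exact d2 hxy
      · exact d3 hxy
      · exact d4 hxy
  obtain ⟨g, hg, hgA⟩ := extend_perm (Vset σ) h hinjV hkapV
  refine ⟨g, hg, ?_⟩
  have hsubset : σ.image (emap g) ⊆ σ' := by
    intro w hw
    obtain ⟨p, hp, rfl⟩ := mem_image.mp hw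
    have hx1 : p.1 ∈ Vset σ := mem_Vset.mpr ⟨p, hp, Or.inl rfl⟩
    have hx2 : p.2 ∈ Vset σ := mem_Vset.mpr ⟨p, hp, Or.inr rfl⟩
    obtain ⟨p', hp', hk, hc⟩ := hmain p hp
    have hlt' := hσ'.1.1 p' hp'
    have hemap : emap g p = p' := by
      unfold emap
      rw [hgA p.1 hx1, hgA p.2 hx2]
      rcases hc with ⟨a1, a2⟩ | ⟨a1, a2⟩ <;> rw [a1, a2]
      · rw [min_eq_left (le_of_lt hlt'), max_eq_right (le_of_lt hlt')]
      · rw [min_comm, max_comm, min_eq_left (le_of_lt hlt'), max_eq_right (le_of_lt hlt')]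
    rw [hemap]; exact hp'
  apply Finset.eq_of_subset_of_card_le hsubset
  have c1 : (σ.image (emap g)).card = σ.card := Finset.card_image_iff.mpr (emap_injOn g hσ.1)
  have c2 : σ.card = (σ.image (kmap kap)).card :=
    (Finset.card_image_iff.mpr (gamma_injOn hσ)).symm
  have c3 : σ'.card = (σ'.image (kmap kap)).card :=
    (Finset.card_image_iff.mpr (gamma_injOn hσ')).symm
  rw [himg] at c2
  omega
end Perm
end MatchProof
end
noncomputable section
namespace MatchProof
open MatchPaper Finset
set_option linter.unusedSectionVars false

lemma mapSign_id {V : Type*} (r : V → ℕ) (s : Finset V) :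
    mapSign r r (id : V → V) s = 1 := by
  unfold mapSign
  rw [filter_false_of_mem, card_empty, pow_zero]
  rintro q hq ⟨h1, h2⟩
  exact absurd (h1.trans h2) (lt_irrefl _)

lemma chainMap_face {V W : Type*} [DecidableEq V] [DecidableEq W] (rank : V → ℕ)
    (rank' : W → ℕ) (f : V → W) (K : Finset V → Prop) (K' : Finset W → Prop) (c : ℕ)
    {τ : Finset V} (h : K τ ∧ τ.card = c) (x : ℤ) :
    chainMap ℤ rank rank' f K K' c (Finsupp.single ⟨τ, h⟩ x)
      = x • (mapSign rank rank' f τ • basisOrZero ℤ K' c (τ.image f)) :=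
  chainMap_single rank rank' f K K' c ⟨τ, h⟩ x

lemma bdry_face {V : Type*} [DecidableEq V] (rank : V → ℕ) (K : Finset V → Prop) (c : ℕ)
    {τ : Finset V} (h : K τ ∧ τ.card = c + 1) (x : ℤ) :
    bdry ℤ rank K c (Finsupp.single ⟨τ, h⟩ x)
      = x • ∑ v ∈ τ, ((-1 : ℤ) ^ ((τ.filter fun u => rank u < rank v).card) •
          basisOrZero ℤ K c (τ.erase v)) :=
  bdry_single rank K c ⟨τ, h⟩ x

section Assemble
variable {N n : ℕ} (kap : Fin N → Fin n) (lam : Fin n → ℕ)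

/-- κ : C(M_N) → C(BD) -/
abbrev kapC (c : ℕ) : SChain ℤ (IsMatching N) c →ₗ[ℤ] SChain ℤ (IsBDGraph lam) c :=
  chainMap ℤ (rankP N) (rankP n) (kmap kap) (IsMatching N) (IsBDGraph lam) c

/-- P : C(M_N) → C(Δ) -/
abbrev PdelC (c : ℕ) : SChain ℤ (IsMatching N) c →ₗ[ℤ] SChain ℤ (IsDelta kap) c :=
  chainMap ℤ (rankP N) (rankP N) id (IsMatching N) (IsDelta kap) c

/-- i : C(Δ) → C(M_N) -/
abbrev iDelC (c : ℕ) : SChain ℤ (IsDelta kap) c →ₗ[ℤ] SChain ℤ (IsMatching N) c :=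
  chainMap ℤ (rankP N) (rankP N) id (IsDelta kap) (IsMatching N) c

variable {g : Equiv.Perm (Fin N)}

lemma emap_face_card {σ : Finset (Fin N × Fin N)} (hM : IsMatching N σ)
    (g : Equiv.Perm (Fin N)) : (σ.image (emap g)).card = σ.card :=
  Finset.card_image_iff.mpr (emap_injOn g hM)

/-- (A) κ is invariant under the Young-group action. -/
lemma kapC_actC (hg : KeepsBlocks kap g) (c : ℕ) :
    (kapC kap lam c).comp (actC ℤ N (IsMatching N) g c) = kapC kap lam c := by
  apply Finsupp.lhom_ext
  intro σ x
  obtain ⟨hσM, hσc⟩ := σ.2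
  have hface : IsMatching N (σ.1.image (emap g)) := isMatching_image_emap g hσM
  have himc : (σ.1.image (emap g)).card = c := by rw [emap_face_card hσM g, hσc]
  have himg : (σ.1.image (emap g)).image (kmap kap) = σ.1.image (kmap kap) := by
    rw [Finset.image_image]
    exact image_congr' (fun p hp => kmap_emap hg p)
  rw [LinearMap.comp_apply]
  unfold actC
  rw [chainMap_single, map_smul, map_smul,
      basisOrZero_pos (IsMatching N) c ⟨hface, himc⟩, chainMap_face, one_smul,
      chainMap_single, himg]
  by_cases hd : InDelta kap σ.1
  · rw [basisOrZero_delta_image hd hσc]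
    simp only [smul_zero]
  · have hΓ : IsGamma kap σ.1 := ⟨hσM, hd⟩
    have hΓ' : IsGamma kap (σ.1.image (emap g)) :=
      ⟨hface, fun h => hd ((inDelta_image_emap hσM hg).mp h)⟩
    have hsign : mapSign (rankP N) (rankP n) (kmap kap ∘ emap g) σ.1
        = mapSign (rankP N) (rankP N) (emap g) σ.1
          * mapSign (rankP N) (rankP n) (kmap kap) (σ.1.image (emap g)) :=
      mapSign_comp (rankP_injective N) (rankP_injective N) (rankP_injective n)
        (emap_injOn g hσM) (gamma_injOn hΓ')
    have hsign2 : mapSign (rankP N) (rankP n) (kmap kap ∘ emap g) σ.1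
        = mapSign (rankP N) (rankP n) (kmap kap) σ.1 :=
      mapSign_congr (fun p hp => by rw [Function.comp_apply, kmap_emap hg])
    rw [smul_smul, smul_smul, smul_smul, mul_assoc]
    congr 1
    rw [← hsign, hsign2]

/-- (B) P intertwines the actions on C(M) and C(Δ). -/
lemma PdelC_actC (hg : KeepsBlocks kap g) (c : ℕ) :
    (PdelC kap c).comp (actC ℤ N (IsMatching N) g c)
      = (actC ℤ N (IsDelta kap) g c).comp (PdelC kap c) := by
  apply Finsupp.lhom_ext
  intro σ x
  obtain ⟨hσM, hσc⟩ := σ.2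
  have hface : IsMatching N (σ.1.image (emap g)) := isMatching_image_emap g hσM
  have himc : (σ.1.image (emap g)).card = c := by rw [emap_face_card hσM g, hσc]
  rw [LinearMap.comp_apply, LinearMap.comp_apply]
  unfold actC
  rw [chainMap_single, map_smul, map_smul,
      basisOrZero_pos (IsMatching N) c ⟨hface, himc⟩, chainMap_face, one_smul,
      mapSign_id, one_smul, Finset.image_id,
      chainMap_single, mapSign_id, one_smul, Finset.image_id, map_smul]
  by_cases hd : InDelta kap σ.1
  · rw [basisOrZero_pos (IsDelta kap) c ⟨⟨hσM, hd⟩, hσc⟩, chainMap_face, one_smul,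
        basisOrZero_pos (IsDelta kap) c
          ⟨⟨hface, (inDelta_image_emap hσM hg).mpr hd⟩, himc⟩]
  · rw [basisOrZero_neg (IsDelta kap) c (fun hc => hd hc.1.2),
        basisOrZero_neg (IsDelta kap) c
          (fun hc => hd ((inDelta_image_emap hσM hg).mp hc.1.2)),
        map_zero]
    simp only [smul_zero]

/-- i intertwines the actions on C(Δ) and C(M). -/
lemma iDelC_actC (hg : KeepsBlocks kap g) (c : ℕ) :
    (iDelC kap c).comp (actC ℤ N (IsDelta kap) g c)
      = (actC ℤ N (IsMatching N) g c).comp (iDelC kap c) := by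
  apply Finsupp.lhom_ext
  intro σ x
  obtain ⟨⟨hσM, hσd⟩, hσc⟩ := σ.2
  have hface : IsMatching N (σ.1.image (emap g)) := isMatching_image_emap g hσM
  have himc : (σ.1.image (emap g)).card = c := by rw [emap_face_card hσM g, hσc]
  rw [LinearMap.comp_apply, LinearMap.comp_apply]
  unfold actC
  rw [chainMap_single, map_smul, map_smul,
      basisOrZero_pos (IsDelta kap) c
        ⟨⟨hface, (inDelta_image_emap hσM hg).mpr hσd⟩, himc⟩,
      chainMap_face, one_smul, mapSign_id, one_smul, Finset.image_id,
      chainMap_single, mapSign_id, one_smul, Finset.image_id,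
      basisOrZero_pos (IsMatching N) c ⟨hσM, hσc⟩, map_smul, chainMap_face, one_smul,
      basisOrZero_pos (IsMatching N) c ⟨hface, himc⟩]

/-- ∂ commutes with the action on C(M). -/
lemma bdry_actC_M (g : Equiv.Perm (Fin N)) (c : ℕ) :
    (actC ℤ N (IsMatching N) g c).comp (bdry ℤ (rankP N) (IsMatching N) c)
      = (bdry ℤ (rankP N) (IsMatching N) c).comp (actC ℤ N (IsMatching N) g (c + 1)) := by
  apply Finsupp.lhom_ext
  intro σ x
  obtain ⟨hσM, hσc⟩ := σ.2
  rw [LinearMap.comp_apply, LinearMap.comp_apply]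
  have hx : (Finsupp.single σ x : SChain ℤ (IsMatching N) (c+1)) = x • Finsupp.single σ 1 := by
    rw [Finsupp.smul_single, smul_eq_mul, mul_one]
  rw [hx, map_smul, map_smul, map_smul, map_smul]
  congr 1
  exact chainMap_bdry_single (rankP N) (rankP N) (rankP_injective N) (rankP_injective N)
    (emap g) (IsMatching N) (IsMatching N) c σ.1 ⟨hσM, hσc⟩ (emap_injOn g hσM)
    (isMatching_image_emap g hσM)
    (fun p hp => iff_of_true (isMatching_erase hσM p)
      (isMatching_image_emap g (isMatching_erase hσM p)))

/-- ∂ commutes with the action on C(Δ). -/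
lemma bdry_actC_D (g : Equiv.Perm (Fin N)) (hg : KeepsBlocks kap g) (c : ℕ) :
    (actC ℤ N (IsDelta kap) g c).comp (bdry ℤ (rankP N) (IsDelta kap) c)
      = (bdry ℤ (rankP N) (IsDelta kap) c).comp (actC ℤ N (IsDelta kap) g (c + 1)) := by
  apply Finsupp.lhom_ext
  intro σ x
  obtain ⟨⟨hσM, hσd⟩, hσc⟩ := σ.2
  rw [LinearMap.comp_apply, LinearMap.comp_apply]
  have hx : (Finsupp.single σ x : SChain ℤ (IsDelta kap) (c+1)) = x • Finsupp.single σ 1 := by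
    rw [Finsupp.smul_single, smul_eq_mul, mul_one]
  rw [hx, map_smul, map_smul, map_smul, map_smul]
  congr 1
  refine chainMap_bdry_single (rankP N) (rankP N) (rankP_injective N) (rankP_injective N)
    (emap g) (IsDelta kap) (IsDelta kap) c σ.1 ⟨⟨hσM, hσd⟩, hσc⟩ (emap_injOn g hσM)
    ⟨isMatching_image_emap g hσM, (inDelta_image_emap hσM hg).mpr hσd⟩
    (fun p hp => ?_)
  constructor
  · rintro ⟨h1, h2⟩
    exact ⟨isMatching_image_emap g h1, (inDelta_image_emap h1 hg).mpr h2⟩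
  · rintro ⟨h1, h2⟩
    exact ⟨isMatching_erase hσM p,
      (inDelta_image_emap (isMatching_erase hσM p) hg).mp h2⟩

/-- (E2) P commutes with ∂. -/
lemma PdelC_bdry (c : ℕ) :
    (PdelC kap c).comp (bdry ℤ (rankP N) (IsMatching N) c)
      = (bdry ℤ (rankP N) (IsDelta kap) c).comp (PdelC kap (c + 1)) := by
  apply Finsupp.lhom_ext
  intro σ x
  obtain ⟨hσM, hσc⟩ := σ.2
  rw [LinearMap.comp_apply, LinearMap.comp_apply]
  rw [bdry_single, map_smul, map_sum, chainMap_single, mapSign_id, one_smul, Finset.image_id]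
  by_cases hd : InDelta kap σ.1
  · rw [basisOrZero_pos (IsDelta kap) (c+1) ⟨⟨hσM, hd⟩, hσc⟩, map_smul, bdry_face, one_smul]
    congr 1
    apply Finset.sum_congr rfl
    intro v hv
    rw [map_smul]
    congr 1
    have hec : (σ.1.erase v).card = c := by rw [card_erase_of_mem hv, hσc]; omega
    by_cases hdv : InDelta kap (σ.1.erase v)
    · rw [basisOrZero_pos (IsMatching N) c ⟨isMatching_erase hσM v, hec⟩, chainMap_face,
          one_smul, mapSign_id, one_smul, Finset.image_id,
          basisOrZero_pos (IsDelta kap) c ⟨⟨isMatching_erase hσM v, hdv⟩, hec⟩]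
    · rw [basisOrZero_pos (IsMatching N) c ⟨isMatching_erase hσM v, hec⟩, chainMap_face,
          one_smul, mapSign_id, one_smul, Finset.image_id,
          basisOrZero_neg (IsDelta kap) c (fun hc => hdv hc.1.2)]
  · rw [basisOrZero_neg (IsDelta kap) (c+1) (fun hc => hd hc.1.2), smul_zero, map_zero]
    have hz : ∀ v ∈ σ.1,
        (PdelC kap c) ((-1:ℤ) ^ ((σ.1.filter fun u => rankP N u < rankP N v).card) •
          basisOrZero ℤ (IsMatching N) c (σ.1.erase v)) = 0 := by
      intro v hv
      have hec : (σ.1.erase v).card = c := by rw [card_erase_of_mem hv, hσc]; omega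
      rw [map_smul, basisOrZero_pos (IsMatching N) c ⟨isMatching_erase hσM v, hec⟩,
          chainMap_face, one_smul, mapSign_id, one_smul, Finset.image_id,
          basisOrZero_neg (IsDelta kap) c
            (fun hc => hd (inDelta_mono (erase_subset v σ.1) hc.1.2)), smul_zero]
    rw [Finset.sum_congr rfl hz, Finset.sum_const_zero, smul_zero]
end Assemble
end MatchProof
end
noncomputable section
namespace MatchProof
open MatchPaper Finset
set_option linter.unusedSectionVars false

attribute [local instance 10] Classical.propDecidable

section Assemble2
variable {N n : ℕ} (kap : Fin N → Fin n) (lam : Fin n → ℕ)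
  (hcard : ∀ i, ((univ : Finset (Fin N)).filter fun x => kap x = i).card = lam i)

include hcard in
lemma kapC_bdry (c : ℕ) :
    (kapC kap lam c).comp (bdry ℤ (rankP N) (IsMatching N) c)
      = (bdry ℤ (rankP n) (IsBDGraph lam) c).comp (kapC kap lam (c + 1)) := by
  apply Finsupp.lhom_ext
  intro σ x
  obtain ⟨hσM, hσc⟩ := σ.2
  rw [LinearMap.comp_apply, LinearMap.comp_apply]
  have hx : (Finsupp.single σ x : SChain ℤ (IsMatching N) (c+1)) = x • Finsupp.single σ 1 := by
    rw [Finsupp.smul_single, smul_eq_mul, mul_one]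
  rw [hx, map_smul, map_smul, map_smul, map_smul]
  congr 1
  by_cases hd : InDelta kap σ.1
  · have h1 : (kapC kap lam c) ((bdry ℤ (rankP N) (IsMatching N) c) (Finsupp.single σ 1)) = 0 :=
      kappa_bdry_delta (lam := lam) hσM hd hσc
    rw [h1, chainMap_single, one_smul, basisOrZero_delta_image hd hσc, smul_zero, map_zero]
  · exact chainMap_bdry_single (rankP N) (rankP n) (rankP_injective N) (rankP_injective n)
      (kmap kap) (IsMatching N) (IsBDGraph lam) c σ.1 ⟨hσM, hσc⟩ (gamma_injOn ⟨hσM, hd⟩)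
      (isBD_image hcard hσM (gamma_injOn ⟨hσM, hd⟩))
      (fun p hp => iff_of_true (isMatching_erase hσM p)
        (isBD_image hcard (isMatching_erase hσM p) (gamma_injOn (isGamma_erase ⟨hσM, hd⟩ p))))

/-- a chosen lift of a BD graph to a Γ matching -/
def LiftF : Finset (Fin n × Fin n) → Finset (Fin N × Fin N) := fun τ =>
  if h : IsBDGraph lam τ then (exists_gamma_lift hcard τ h).choose else ∅

lemma LiftF_spec {τ : Finset (Fin n × Fin n)} (h : IsBDGraph lam τ) :
    IsGamma kap (LiftF kap lam hcard τ) ∧ (LiftF kap lam hcard τ).image (kmap kap) = τ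
      ∧ (LiftF kap lam hcard τ).card = τ.card := by
  rw [LiftF, dif_pos h]
  exact (exists_gamma_lift hcard τ h).choose_spec

/-- the section s : C(BD) → C(M) -/
def secC (c : ℕ) : SChain ℤ (IsBDGraph lam) c →ₗ[ℤ] SChain ℤ (IsMatching N) c :=
  Finsupp.lsum ℤ fun τ => LinearMap.toSpanSingleton ℤ _
    (mapSign (rankP N) (rankP n) (kmap kap) (LiftF kap lam hcard τ.1) •
      basisOrZero ℤ (IsMatching N) c (LiftF kap lam hcard τ.1))

lemma secC_single (c : ℕ) (τ : {τ : Finset (Fin n × Fin n) // IsBDGraph lam τ ∧ τ.card = c})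
    (x : ℤ) :
    secC kap lam hcard c (Finsupp.single τ x)
      = x • (mapSign (rankP N) (rankP n) (kmap kap) (LiftF kap lam hcard τ.1) •
          basisOrZero ℤ (IsMatching N) c (LiftF kap lam hcard τ.1)) := by
  unfold secC
  rw [Finsupp.lsum_single, LinearMap.toSpanSingleton_apply]

/-- (C1) κ ∘ s = id. -/
lemma kapC_secC (c : ℕ) :
    (kapC kap lam c).comp (secC kap lam hcard c) = LinearMap.id := by
  apply Finsupp.lhom_ext
  intro τ x
  obtain ⟨hτB, hτc⟩ := τ.2
  obtain ⟨hΓ, himg, hLc⟩ := LiftF_spec kap lam hcard hτB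
  have hLcard : (LiftF kap lam hcard τ.1).card = c := by rw [hLc, hτc]
  rw [LinearMap.comp_apply, secC_single, map_smul, map_smul,
      basisOrZero_pos (IsMatching N) c ⟨hΓ.1, hLcard⟩, chainMap_face, one_smul, himg,
      basisOrZero_pos (IsBDGraph lam) c ⟨hτB, hτc⟩, smul_smul, smul_smul, mul_assoc,
      mapSign_mul_self, mul_one, LinearMap.id_apply, Finsupp.smul_single, smul_eq_mul, mul_one]

/-- (C3) P ∘ s = 0. -/
lemma PdelC_secC (c : ℕ) :
    (PdelC kap c).comp (secC kap lam hcard c) = 0 := by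
  apply Finsupp.lhom_ext
  intro τ x
  obtain ⟨hτB, hτc⟩ := τ.2
  obtain ⟨hΓ, himg, hLc⟩ := LiftF_spec kap lam hcard hτB
  have hLcard : (LiftF kap lam hcard τ.1).card = c := by rw [hLc, hτc]
  rw [LinearMap.comp_apply, secC_single, map_smul, map_smul,
      basisOrZero_pos (IsMatching N) c ⟨hΓ.1, hLcard⟩, chainMap_face, one_smul,
      mapSign_id, one_smul, Finset.image_id,
      basisOrZero_neg (IsDelta kap) c (fun hc => hΓ.2 hc.1.2)]
  simp only [smul_zero, LinearMap.zero_apply]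

/-- (C2) κ ∘ i = 0. -/
lemma kapC_iDelC (c : ℕ) :
    (kapC kap lam c).comp (iDelC kap c) = 0 := by
  apply Finsupp.lhom_ext
  intro σ x
  obtain ⟨⟨hσM, hσd⟩, hσc⟩ := σ.2
  rw [LinearMap.comp_apply, chainMap_single, mapSign_id, one_smul, Finset.image_id,
      basisOrZero_pos (IsMatching N) c ⟨hσM, hσc⟩, map_smul, chainMap_face, one_smul,
      basisOrZero_delta_image hσd hσc]
  simp only [smul_zero, LinearMap.zero_apply]

/-- (C4) P ∘ i = id. -/
lemma PdelC_iDelC (c : ℕ) :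
    (PdelC kap c).comp (iDelC kap c) = LinearMap.id := by
  apply Finsupp.lhom_ext
  intro σ x
  obtain ⟨⟨hσM, hσd⟩, hσc⟩ := σ.2
  rw [LinearMap.comp_apply, chainMap_single, mapSign_id, one_smul, Finset.image_id,
      basisOrZero_pos (IsMatching N) c ⟨hσM, hσc⟩, map_smul, chainMap_face, one_smul,
      mapSign_id, one_smul, Finset.image_id,
      basisOrZero_pos (IsDelta kap) c ⟨⟨hσM, hσd⟩, hσc⟩,
      LinearMap.id_apply, Finsupp.smul_single, smul_eq_mul, mul_one]

/-- the key quotient identity : s ∘ κ + i ∘ P = id modulo ysub. -/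
lemma secC_kapC_iDelC_PdelC (c : ℕ) :
    ((Submodule.mkQ (ysub ℤ N n kap (IsMatching N) c)).comp
        ((secC kap lam hcard c).comp (kapC kap lam c)))
      + ((Submodule.mkQ (ysub ℤ N n kap (IsMatching N) c)).comp
        ((iDelC kap c).comp (PdelC kap c)))
      = Submodule.mkQ (ysub ℤ N n kap (IsMatching N) c) := by
  apply Finsupp.lhom_ext
  intro σ x
  obtain ⟨hσM, hσc⟩ := σ.2
  rw [LinearMap.add_apply, LinearMap.comp_apply, LinearMap.comp_apply,
      LinearMap.comp_apply, LinearMap.comp_apply]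
  by_cases hd : InDelta kap σ.1
  · rw [chainMap_single, basisOrZero_delta_image hd hσc, smul_zero, smul_zero, map_zero,
        map_zero, chainMap_single, mapSign_id, one_smul, Finset.image_id,
        basisOrZero_pos (IsDelta kap) c ⟨⟨hσM, hd⟩, hσc⟩, map_smul, chainMap_face, one_smul,
        mapSign_id, one_smul, Finset.image_id, basisOrZero_pos (IsMatching N) c ⟨hσM, hσc⟩,
        Finsupp.smul_single, smul_eq_mul, mul_one, zero_add]
  · have hΓ : IsGamma kap σ.1 := ⟨hσM, hd⟩
    have hτB : IsBDGraph lam (σ.1.image (kmap kap)) := isBD_image hcard hσM (gamma_injOn hΓ)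
    have hτc : (σ.1.image (kmap kap)).card = c := by
      rw [Finset.card_image_iff.mpr (gamma_injOn hΓ), hσc]
    obtain ⟨hΓ', himg, hLc⟩ := LiftF_spec kap lam hcard hτB
    have hLcard : (LiftF kap lam hcard (σ.1.image (kmap kap))).card = c := by
      rw [hLc, hτc]
    obtain ⟨g, hg, hgimg⟩ := exists_perm hΓ' hΓ (by rw [himg])
    -- second summand is zero
    rw [chainMap_single (rankP N) (rankP N) id (IsMatching N) (IsDelta kap), mapSign_id,
        one_smul, Finset.image_id, basisOrZero_neg (IsDelta kap) c (fun hc => hd hc.1.2),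
        smul_zero, map_zero, map_zero, add_zero]
    -- first summand
    rw [chainMap_single, basisOrZero_pos (IsBDGraph lam) c ⟨hτB, hτc⟩]
    simp only [map_smul]
    rw [secC_single, one_smul, basisOrZero_pos (IsMatching N) c ⟨hΓ'.1, hLcard⟩]
    simp only [map_smul]
    set L := LiftF kap lam hcard (σ.1.image (kmap kap)) with hL
    set mσ := mapSign (rankP N) (rankP n) (kmap kap) σ.1 with hmσ
    set e0 := mapSign (rankP N) (rankP n) (kmap kap) L with he0
    set mg := mapSign (rankP N) (rankP N) (emap g) L with hmg
    have hactL : actC ℤ N (IsMatching N) g c (Finsupp.single ⟨L, hΓ'.1, hLcard⟩ 1)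
        = mg • Finsupp.single σ (1 : ℤ) := by
      unfold actC
      rw [chainMap_face, one_smul, hgimg,
          basisOrZero_pos (IsMatching N) c ⟨hσM, hσc⟩]
    have hmem : (Finsupp.single ⟨L, hΓ'.1, hLcard⟩ 1 : SChain ℤ (IsMatching N) c)
        - actC ℤ N (IsMatching N) g c (Finsupp.single ⟨L, hΓ'.1, hLcard⟩ 1)
        ∈ ysub ℤ N n kap (IsMatching N) c :=
      Submodule.subset_span ⟨_, g, hg, rfl⟩
    have hmkeq : Submodule.mkQ (ysub ℤ N n kap (IsMatching N) c)
          (Finsupp.single ⟨L, hΓ'.1, hLcard⟩ 1)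
        = Submodule.mkQ (ysub ℤ N n kap (IsMatching N) c)
          (mg • Finsupp.single σ (1 : ℤ)) := by
      rw [← hactL]
      exact (Submodule.Quotient.eq _).mpr hmem
    have hsign : e0 = mg * mσ := by
      have h1 : mapSign (rankP N) (rankP n) (kmap kap ∘ emap g) L = e0 :=
        mapSign_congr (fun p hp => by rw [Function.comp_apply, kmap_emap hg])
      have h2 : mapSign (rankP N) (rankP n) (kmap kap ∘ emap g) L
          = mg * mapSign (rankP N) (rankP n) (kmap kap) (L.image (emap g)) :=
        mapSign_comp (rankP_injective N) (rankP_injective N) (rankP_injective n)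
          (emap_injOn g hΓ'.1) (by rw [hgimg]; exact gamma_injOn hΓ)
      rw [← h1, h2, hgimg]
    rw [hmkeq]
    simp only [map_smul]
    rw [smul_smul, smul_smul, smul_smul]
    have hfin : x * mσ * e0 * mg = x := by
      rw [hsign]
      have m1 : mσ * mσ = 1 := mapSign_mul_self _ _ _ _
      have m2 : mg * mg = 1 := mapSign_mul_self _ _ _ _
      calc x * mσ * (mg * mσ) * mg = x * ((mσ * mσ) * (mg * mg)) := by ring
        _ = x := by rw [m1, m2]; ring
    rw [hfin, ← map_smul, Finsupp.smul_single, smul_eq_mul, mul_one]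
end Assemble2
end MatchProof
end
noncomputable section
namespace MatchProof
open MatchPaper Finset
set_option linter.unusedSectionVars false

attribute [local instance 10] Classical.propDecidable

lemma descendL_mk {R M₁ M₂ : Type*} [CommRing R] [AddCommGroup M₁] [Module R M₁]
    [AddCommGroup M₂] [Module R M₂] {S : Submodule R M₁} {T : Submodule R M₂}
    {f : M₁ →ₗ[R] M₂} (h : S ≤ T.comap f) (x : M₁) :
    descendL R S T f (Submodule.Quotient.mk x) = Submodule.Quotient.mk (f x) := by
  rw [descendL, dif_pos h]
  rfl

lemma liftOrZeroL_mk {R M₁ M₂ : Type*} [CommRing R] [AddCommGroup M₁] [Module R M₁]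
    [AddCommGroup M₂] [Module R M₂] {S : Submodule R M₁} {f : M₁ →ₗ[R] M₂}
    (h : S ≤ LinearMap.ker f) (x : M₁) :
    liftOrZeroL R S f (Submodule.Quotient.mk x) = f x := by
  rw [liftOrZeroL, dif_pos h]
  rfl

section Quot
variable {N n : ℕ} (kap : Fin N → Fin n) (lam : Fin n → ℕ)
  (hcard : ∀ i, ((univ : Finset (Fin N)).filter fun x => kap x = i).card = lam i)

include hcard in
lemma ysub_le_ker_kap (c : ℕ) :
    ysub ℤ N n kap (IsMatching N) c ≤ LinearMap.ker (kapC kap lam c) := by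
  rw [ysub, Submodule.span_le]
  rintro x ⟨ch, g, hg, rfl⟩
  simp only [SetLike.mem_coe, LinearMap.mem_ker, map_sub]
  rw [show (kapC kap lam c) (actC ℤ N (IsMatching N) g c ch) = (kapC kap lam c) ch from
    LinearMap.congr_fun (kapC_actC kap lam hg c) ch]
  exact sub_self _

lemma ysub_le_comap_P (c : ℕ) :
    ysub ℤ N n kap (IsMatching N) c
      ≤ (ysub ℤ N n kap (IsDelta kap) c).comap (PdelC kap c) := by
  rw [ysub, Submodule.span_le]
  rintro x ⟨ch, g, hg, rfl⟩
  simp only [SetLike.mem_coe, Submodule.mem_comap, map_sub]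
  apply Submodule.subset_span
  exact ⟨PdelC kap c ch, g, hg, by
    rw [show (PdelC kap c) (actC ℤ N (IsMatching N) g c ch)
        = actC ℤ N (IsDelta kap) g c (PdelC kap c ch) from
      LinearMap.congr_fun (PdelC_actC kap hg c) ch]⟩

lemma ysub_le_comap_i (c : ℕ) :
    ysub ℤ N n kap (IsDelta kap) c
      ≤ (ysub ℤ N n kap (IsMatching N) c).comap (iDelC kap c) := by
  rw [ysub, Submodule.span_le]
  rintro x ⟨ch, g, hg, rfl⟩
  simp only [SetLike.mem_coe, Submodule.mem_comap, map_sub]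
  apply Submodule.subset_span
  exact ⟨iDelC kap c ch, g, hg, by
    rw [show (iDelC kap c) (actC ℤ N (IsDelta kap) g c ch)
        = actC ℤ N (IsMatching N) g c (iDelC kap c ch) from
      LinearMap.congr_fun (iDelC_actC kap hg c) ch]⟩

lemma ysub_le_comap_bdry_M (c : ℕ) :
    ysub ℤ N n kap (IsMatching N) (c + 1)
      ≤ (ysub ℤ N n kap (IsMatching N) c).comap (bdry ℤ (rankP N) (IsMatching N) c) := by
  rw [ysub, Submodule.span_le]
  rintro x ⟨ch, g, hg, rfl⟩
  simp only [SetLike.mem_coe, Submodule.mem_comap, map_sub]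
  apply Submodule.subset_span
  exact ⟨bdry ℤ (rankP N) (IsMatching N) c ch, g, hg, by
    rw [show (bdry ℤ (rankP N) (IsMatching N) c) (actC ℤ N (IsMatching N) g (c+1) ch)
        = actC ℤ N (IsMatching N) g c (bdry ℤ (rankP N) (IsMatching N) c ch) from
      (LinearMap.congr_fun (bdry_actC_M g c) ch).symm]⟩

lemma ysub_le_comap_bdry_D (c : ℕ) :
    ysub ℤ N n kap (IsDelta kap) (c + 1)
      ≤ (ysub ℤ N n kap (IsDelta kap) c).comap (bdry ℤ (rankP N) (IsDelta kap) c) := by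
  rw [ysub, Submodule.span_le]
  rintro x ⟨ch, g, hg, rfl⟩
  simp only [SetLike.mem_coe, Submodule.mem_comap, map_sub]
  apply Submodule.subset_span
  exact ⟨bdry ℤ (rankP N) (IsDelta kap) c ch, g, hg, by
    rw [show (bdry ℤ (rankP N) (IsDelta kap) c) (actC ℤ N (IsDelta kap) g (c+1) ch)
        = actC ℤ N (IsDelta kap) g c (bdry ℤ (rankP N) (IsDelta kap) c ch) from
      (LinearMap.congr_fun (bdry_actC_D kap g hg c) ch).symm]⟩

/-- the main theorem, inside the working namespace. -/
theorem main (hcard' : ∀ i : Fin n,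
      (Finset.univ.filter fun x => kap x = i).card = lam i) :
    ∃ e : ∀ c : ℕ, QC ℤ N n kap (IsMatching N) c ≃+
        SChain ℤ (IsBDGraph lam) c × QC ℤ N n kap (IsDelta kap) c,
      ∀ (c : ℕ) (x : QC ℤ N n kap (IsMatching N) (c + 1)),
        e c (qbdry ℤ N n kap (IsMatching N) c x) =
          (bdry ℤ (rankP n) (IsBDGraph lam) c (e (c + 1) x).1,
            qbdry ℤ N n kap (IsDelta kap) c (e (c + 1) x).2) := by
  classical
  set F : ∀ c : ℕ, QC ℤ N n kap (IsMatching N) c →ₗ[ℤ]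
      (SChain ℤ (IsBDGraph lam) c × QC ℤ N n kap (IsDelta kap) c) :=
    fun c => (liftOrZeroL ℤ (ysub ℤ N n kap (IsMatching N) c) (kapC kap lam c)).prod
      (descendL ℤ (ysub ℤ N n kap (IsMatching N) c) (ysub ℤ N n kap (IsDelta kap) c)
        (PdelC kap c)) with hF
  set G : ∀ c : ℕ, (SChain ℤ (IsBDGraph lam) c × QC ℤ N n kap (IsDelta kap) c) →ₗ[ℤ]
      QC ℤ N n kap (IsMatching N) c :=
    fun c => (((ysub ℤ N n kap (IsMatching N) c).mkQ).comp (secC kap lam hcard' c)).coprod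
      (descendL ℤ (ysub ℤ N n kap (IsDelta kap) c) (ysub ℤ N n kap (IsMatching N) c)
        (iDelC kap c)) with hG
  have hFmk : ∀ (c : ℕ) (z : SChain ℤ (IsMatching N) c),
      F c (Submodule.Quotient.mk z)
        = (kapC kap lam c z, Submodule.Quotient.mk (PdelC kap c z)) := by
    intro c z
    rw [hF]
    simp only [LinearMap.prod_apply, Function.prod]
    rw [liftOrZeroL_mk (ysub_le_ker_kap kap lam hcard' c), descendL_mk (ysub_le_comap_P kap c)]
  have hGmk : ∀ (c : ℕ) (b : SChain ℤ (IsBDGraph lam) c) (w : SChain ℤ (IsDelta kap) c),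
      G c (b, Submodule.Quotient.mk w)
        = Submodule.Quotient.mk (secC kap lam hcard' c b + iDelC kap c w) := by
    intro c b w
    rw [hG]
    simp only [LinearMap.coprod_apply, LinearMap.comp_apply, Submodule.mkQ_apply]
    rw [descendL_mk (ysub_le_comap_i kap c), ← Submodule.Quotient.mk_add]
  have h1 : ∀ c, (F c).comp (G c) = LinearMap.id := by
    intro c
    apply LinearMap.ext
    rintro ⟨b, y⟩
    obtain ⟨w, rfl⟩ := Submodule.mkQ_surjective _ y
    rw [LinearMap.comp_apply, LinearMap.id_apply, Submodule.mkQ_apply, hGmk, hFmk, map_add,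
        map_add]
    rw [show (kapC kap lam c) (secC kap lam hcard' c b) = b from
        LinearMap.congr_fun (kapC_secC kap lam hcard' c) b,
      show (kapC kap lam c) (iDelC kap c w) = 0 from
        LinearMap.congr_fun (kapC_iDelC kap lam c) w,
      show (PdelC kap c) (secC kap lam hcard' c b) = 0 from
        LinearMap.congr_fun (PdelC_secC kap lam hcard' c) b,
      show (PdelC kap c) (iDelC kap c w) = w from
        LinearMap.congr_fun (PdelC_iDelC kap c) w]
    rw [add_zero, zero_add]
  have h2 : ∀ c, (G c).comp (F c) = LinearMap.id := by
    intro c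
    apply Submodule.linearMap_qext
    apply LinearMap.ext
    intro z
    rw [LinearMap.comp_apply, LinearMap.comp_apply, LinearMap.comp_apply,
        Submodule.mkQ_apply, hFmk, hGmk, LinearMap.id_apply]
    exact LinearMap.congr_fun (secC_kapC_iDelC_PdelC kap lam hcard' c) z
  set e : ∀ c : ℕ, QC ℤ N n kap (IsMatching N) c ≃+
      (SChain ℤ (IsBDGraph lam) c × QC ℤ N n kap (IsDelta kap) c) :=
    fun c => (LinearEquiv.ofLinear (F c) (G c) (h1 c) (h2 c)).toAddEquiv with he
  refine ⟨e, ?_⟩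
  intro c x
  obtain ⟨z, rfl⟩ := Submodule.mkQ_surjective _ x
  have hqM : qbdry ℤ N n kap (IsMatching N) c (Submodule.Quotient.mk z)
      = Submodule.Quotient.mk (bdry ℤ (rankP N) (IsMatching N) c z) := by
    rw [qbdry]
    exact descendL_mk (ysub_le_comap_bdry_M kap c) z
  have hqD : ∀ w : SChain ℤ (IsDelta kap) (c + 1),
      qbdry ℤ N n kap (IsDelta kap) c (Submodule.Quotient.mk w)
        = Submodule.Quotient.mk (bdry ℤ (rankP N) (IsDelta kap) c w) := by
    intro w
    rw [qbdry]
    exact descendL_mk (ysub_le_comap_bdry_D kap c) w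
  have hecoe : ∀ (c : ℕ) (y : QC ℤ N n kap (IsMatching N) c), e c y = F c y := by
    intro c y
    rw [he]
    simp only [LinearEquiv.coe_toAddEquiv, LinearEquiv.ofLinear_apply]
    rfl
  rw [Submodule.mkQ_apply, hqM, hecoe, hecoe, hFmk, hFmk]
  rw [show (kapC kap lam c) (bdry ℤ (rankP N) (IsMatching N) c z)
      = bdry ℤ (rankP n) (IsBDGraph lam) c (kapC kap lam (c+1) z) from
    LinearMap.congr_fun (kapC_bdry kap lam hcard' c) z]
  rw [show (PdelC kap c) (bdry ℤ (rankP N) (IsMatching N) c z)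
      = bdry ℤ (rankP N) (IsDelta kap) c (PdelC kap (c+1) z) from
    LinearMap.congr_fun (PdelC_bdry kap c) z]
  rw [hqD]
end Quot
end MatchProof
end
open MatchPaper in
/-- There is an isomorphism of chain complexes
`C̃(M_N)/S_λ ≅ C̃(BD_n^λ) ⊕ C̃(Δ_λ)/S_λ`. -/
theorem quotient_chain_complex_splitting
    (N n : ℕ) (lam : Fin n → ℕ) (kap : Fin N → Fin n)
    (hcard : ∀ i : Fin n, (Finset.univ.filter fun x => kap x = i).card = lam i) :
    ∃ e : ∀ c : ℕ, QC ℤ N n kap (IsMatching N) c ≃+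
        SChain ℤ (IsBDGraph lam) c × QC ℤ N n kap (IsDelta kap) c,
      ∀ (c : ℕ) (x : QC ℤ N n kap (IsMatching N) (c + 1)),
        e c (qbdry ℤ N n kap (IsMatching N) c x) =
          (bdry ℤ (rankP n) (IsBDGraph lam) c (e (c + 1) x).1,
            qbdry ℤ N n kap (IsDelta kap) c (e (c + 1) x).2) := by
  exact MatchProof.main kap lam hcard
end

section
/- Every element of the quotient chain complex C̃(Δ_λ)/S_λ satisfies 2x = 0; that is, each group (C̃(Δ_λ)/S_λ)_d is an elementary abelian 2-group. -/
set_option synthInstance.maxHeartbeats 1000000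
set_option maxHeartbeats 1000000

noncomputable section

namespace MatchPaper

attribute [local instance 10] Classical.propDecidable

end MatchPaper

end

section AuxStatement11

open MatchPaper

attribute [local instance 10] Classical.propDecidable

/-- If a finset carries an involution with a unique fixed point, its cardinality is odd. -/
lemma aux_neg_one_pow_card {α : Type*} (s : Finset α) (ι : α → α)
    (hmem : ∀ a ∈ s, ι a ∈ s) (hinv : ∀ a ∈ s, ι (ι a) = a)
    (w : α) (hw : w ∈ s) (hfix : ∀ a ∈ s, (ι a = a ↔ a = w)) :
    (-1 : ℤ) ^ s.card = -1 := by
  classical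
  have hprod : ∏ _x ∈ s, (-1 : ℤ) = (-1 : ℤ) ^ s.card := Finset.prod_const _
  rw [← hprod, ← Finset.mul_prod_erase s _ hw]
  have hiw : ι w = w := (hfix w hw).mpr rfl
  have h1 : ∏ _x ∈ s.erase w, (-1 : ℤ) = 1 := by
    refine Finset.prod_involution (fun a _ => ι a) (fun a ha => by norm_num)
      (fun a ha _ => ?_) (fun a ha => ?_) (fun a ha => ?_)
    · intro h
      have h' : ι a = a := h
      have ha' := Finset.mem_erase.mp ha
      exact ha'.1 ((hfix a ha'.2).mp h')
    · have ha' := Finset.mem_erase.mp ha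
      refine Finset.mem_erase.mpr ⟨fun h => ?_, hmem a ha'.2⟩
      have h' : ι a = w := h
      have := hinv a ha'.2
      rw [h', hiw] at this
      exact ha'.1 this.symm
    · exact hinv a (Finset.mem_erase.mp ha).2
  rw [h1, mul_one]

/-- The sign of a map that transposes two elements of `σ` and fixes the rest is `-1`. -/
lemma aux_mapSign_swap {V : Type*} (rank : V → ℕ) (hrank : Function.Injective rank)
    (σ : Finset V) (f : V → V) (p q : V) (hp : p ∈ σ) (hq : q ∈ σ) (hpq : p ≠ q)
    (hfp : f p = q) (hfq : f q = p) (hfr : ∀ r ∈ σ, r ≠ p → r ≠ q → f r = r) :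
    mapSign rank rank f σ = -1 := by
  have key : ∀ p q : V, p ∈ σ → q ∈ σ → rank p < rank q → f p = q → f q = p →
      (∀ r ∈ σ, r ≠ p → r ≠ q → f r = r) → mapSign rank rank f σ = -1 := by
    clear hfp hfq hfr hp hq hpq p q
    intro p q hp hq hlt hfp hfq hfr
    have hmemσ : ∀ r ∈ σ, f r ∈ σ := by
      intro r hr
      by_cases h1 : r = p
      · subst h1; rw [hfp]; exact hq
      by_cases h2 : r = q
      · subst h2; rw [hfq]; exact hp
      · rw [hfr r hr h1 h2]; exact hr
    have hff : ∀ r ∈ σ, f (f r) = r := by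
      intro r hr
      by_cases h1 : r = p
      · subst h1; rw [hfp, hfq]
      by_cases h2 : r = q
      · subst h2; rw [hfq, hfp]
      · rw [hfr r hr h1 h2, hfr r hr h1 h2]
    unfold mapSign
    refine aux_neg_one_pow_card _ (fun z => (f z.2, f z.1)) ?_ ?_ (p, q) ?_ ?_
    · rintro ⟨x, y⟩ hz
      rw [Finset.mem_filter, Finset.mem_product] at hz ⊢
      obtain ⟨⟨hx, hy⟩, hlt1, hlt2⟩ := hz
      exact ⟨⟨hmemσ y hy, hmemσ x hx⟩, hlt2, by rw [hff x hx, hff y hy]; exact hlt1⟩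
    · rintro ⟨x, y⟩ hz
      rw [Finset.mem_filter, Finset.mem_product] at hz
      obtain ⟨⟨hx, hy⟩, _⟩ := hz
      simp only [hff x hx, hff y hy]
    · rw [Finset.mem_filter, Finset.mem_product]
      exact ⟨⟨hp, hq⟩, hlt, by rw [hfp, hfq]; exact hlt⟩
    · rintro ⟨x, y⟩ hz
      rw [Finset.mem_filter, Finset.mem_product] at hz
      obtain ⟨⟨hx, hy⟩, hlt1, _⟩ := hz
      constructor
      · intro h
        have h1 : f y = x := congrArg Prod.fst h
        have h2 : f x = y := congrArg Prod.snd h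
        by_cases hxp : x = p
        · subst hxp; rw [hfp] at h2; rw [← h2]
        by_cases hxq : x = q
        · subst hxq
          rw [hfq] at h2
          subst h2
          exact absurd hlt1 (not_lt.mpr hlt.le)
        · rw [hfr x hx hxp hxq] at h2
          subst h2
          exact absurd hlt1 (lt_irrefl _)
      · intro h
        rw [Prod.mk.injEq] at h
        obtain ⟨rfl, rfl⟩ := h
        simp only [hfq, hfp]
  rcases lt_or_gt_of_ne (fun h : rank p = rank q => hpq (hrank h)) with h | h
  · exact key p q hp hq h hfp hfq hfr
  · exact key q p hq hp h hfq hfp fun r hr h1 h2 => hfr r hr h2 h1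

lemma aux_rankP_injective (N : ℕ) : Function.Injective (rankP N) := by
  rintro ⟨a, b⟩ ⟨c, d⟩ h
  unfold rankP at h
  simp only at h
  have hb := b.isLt
  have hd := d.isLt
  have hac : a.val = c.val := by
    by_contra hne
    rcases Nat.lt_or_ge a.val c.val with h' | h'
    · have : a.val * N + b.val < c.val * N + d.val :=
        calc a.val * N + b.val < a.val * N + N := by omega
        _ = (a.val + 1) * N := by ring
        _ ≤ c.val * N := Nat.mul_le_mul_right N h'
        _ ≤ c.val * N + d.val := Nat.le_add_right _ _
      omega
    · have h'' : c.val < a.val := by omega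
      have : c.val * N + d.val < a.val * N + b.val :=
        calc c.val * N + d.val < c.val * N + N := by omega
        _ = (c.val + 1) * N := by ring
        _ ≤ a.val * N := Nat.mul_le_mul_right N h''
        _ ≤ a.val * N + b.val := Nat.le_add_right _ _
      omega
  have hbd : b.val = d.val := by
    rw [hac] at h
    omega
  simp only [Prod.mk.injEq]
  exact ⟨Fin.ext hac, Fin.ext hbd⟩

lemma aux_gswap {N : ℕ} (a a' b b' : Fin N)
    (h1 : a ≠ a') (h2 : a ≠ b) (h3 : a ≠ b') (h4 : a' ≠ b) (h5 : a' ≠ b') (h6 : b ≠ b') :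
    ∀ x, (Equiv.swap a a' * Equiv.swap b b') x =
      if x = a then a' else if x = a' then a else if x = b then b' else
        if x = b' then b else x := by
  intro x
  simp only [Equiv.Perm.mul_apply]
  by_cases hx1 : x = a
  · subst hx1
    rw [Equiv.swap_apply_of_ne_of_ne h2 h3, Equiv.swap_apply_left, if_pos rfl]
  by_cases hx2 : x = a'
  · subst hx2
    rw [Equiv.swap_apply_of_ne_of_ne h4 h5, Equiv.swap_apply_right, if_neg h1.symm, if_pos rfl]
  by_cases hx3 : x = b
  · subst hx3
    rw [Equiv.swap_apply_left, Equiv.swap_apply_of_ne_of_ne h3.symm h5.symm,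
      if_neg h2.symm, if_neg h4.symm, if_pos rfl]
  by_cases hx4 : x = b'
  · subst hx4
    rw [Equiv.swap_apply_right, Equiv.swap_apply_of_ne_of_ne h2.symm h4.symm,
      if_neg h3.symm, if_neg h5.symm, if_neg h6.symm, if_pos rfl]
  · rw [Equiv.swap_apply_of_ne_of_ne hx3 hx4, Equiv.swap_apply_of_ne_of_ne hx1 hx2,
      if_neg hx1, if_neg hx2, if_neg hx3, if_neg hx4]

lemma aux_keeps {N n : ℕ} (kap : Fin N → Fin n) (a a' b b' : Fin N)
    (h1 : a ≠ a') (h2 : a ≠ b) (h3 : a ≠ b') (h4 : a' ≠ b) (h5 : a' ≠ b') (h6 : b ≠ b')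
    (hk1 : kap a = kap a') (hk2 : kap b = kap b') :
    KeepsBlocks kap (Equiv.swap a a' * Equiv.swap b b') := by
  intro x
  rw [aux_gswap a a' b b' h1 h2 h3 h4 h5 h6 x]
  split_ifs with e1 e2 e3 e4
  · rw [e1]; exact hk1.symm
  · rw [e2]; exact hk1
  · rw [e3]; exact hk2.symm
  · rw [e4]; exact hk2
  · rfl

lemma aux_actC_basis {N n : ℕ} (kap : Fin N → Fin n) (c : ℕ)
    (σ : Finset (Fin N × Fin N)) (hσ : IsDelta kap σ ∧ σ.card = c)
    (g : Equiv.Perm (Fin N))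
    (p q : Fin N × Fin N) (hp : p ∈ σ) (hq : q ∈ σ) (hpq : p ≠ q)
    (hfp : emap g p = q) (hfq : emap g q = p)
    (hfr : ∀ r ∈ σ, r ≠ p → r ≠ q → emap g r = r) :
    actC ℤ N (IsDelta kap) g c (basisOrZero ℤ (IsDelta kap) c σ)
      = - basisOrZero ℤ (IsDelta kap) c σ := by
  have hmemσ : ∀ r ∈ σ, emap g r ∈ σ := by
    intro r hr
    by_cases h1 : r = p
    · subst h1; rw [hfp]; exact hq
    by_cases h2 : r = q
    · subst h2; rw [hfq]; exact hp
    · rw [hfr r hr h1 h2]; exact hr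
  have hff : ∀ r ∈ σ, emap g (emap g r) = r := by
    intro r hr
    by_cases h1 : r = p
    · subst h1; rw [hfp, hfq]
    by_cases h2 : r = q
    · subst h2; rw [hfq, hfp]
    · rw [hfr r hr h1 h2, hfr r hr h1 h2]
  have himg : σ.image (emap g) = σ := by
    apply Finset.Subset.antisymm
    · intro y hy
      rcases Finset.mem_image.mp hy with ⟨r, hr, rfl⟩
      exact hmemσ r hr
    · intro y hy
      exact Finset.mem_image.mpr ⟨emap g y, hmemσ y hy, hff y hy⟩
  have hsign : mapSign (rankP N) (rankP N) (emap g) σ = -1 :=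
    aux_mapSign_swap (rankP N) (aux_rankP_injective N) σ (emap g) p q hp hq hpq hfp hfq hfr
  have hb : basisOrZero ℤ (IsDelta kap) c σ
      = Finsupp.single (⟨σ, hσ⟩ : {τ : Finset (Fin N × Fin N) // IsDelta kap τ ∧ τ.card = c})
          (1 : ℤ) := dif_pos hσ
  unfold actC chainMap
  rw [hb, Finsupp.lsum_single, LinearMap.toSpanSingleton_apply, one_smul]
  show mapSign (rankP N) (rankP N) (emap g) σ •
      basisOrZero ℤ (IsDelta kap) c (σ.image (emap g)) = _
  rw [himg, hsign, hb, neg_smul, one_smul]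

lemma aux_two_basis_mem {N n : ℕ} (kap : Fin N → Fin n) (c : ℕ)
    (σ : Finset (Fin N × Fin N)) (hσ : IsDelta kap σ ∧ σ.card = c) :
    (2 : ℤ) • basisOrZero ℤ (IsDelta kap) c σ ∈ ysub ℤ N n kap (IsDelta kap) c := by
  obtain ⟨⟨hmat, hdel⟩, hc⟩ := hσ
  obtain ⟨p, hp, q, hq, hpq, hcase⟩ := hdel
  have hpe : p.1 < p.2 := hmat.1 p hp
  have hqe : q.1 < q.2 := hmat.1 q hq
  obtain ⟨d1, d2, d3, d4⟩ := hmat.2 p hp q hq hpq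
  obtain ⟨g, hKeep, hfp, hfq, hgen⟩ :
      ∃ g : Equiv.Perm (Fin N), KeepsBlocks kap g ∧ emap g p = q ∧ emap g q = p ∧
        (∀ x : Fin N, x ≠ p.1 → x ≠ p.2 → x ≠ q.1 → x ≠ q.2 → g x = x) := by
    rcases hcase with ⟨hk1, hk2⟩ | ⟨hk1, hk2⟩
    · -- kap p.1 = kap q.1, kap p.2 = kap q.2
      refine ⟨Equiv.swap p.1 q.1 * Equiv.swap p.2 q.2,
        aux_keeps kap p.1 q.1 p.2 q.2 d1 hpe.ne d2 d3.symm hqe.ne d4 hk1 hk2, ?_, ?_, ?_⟩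
      · have g1 : (Equiv.swap p.1 q.1 * Equiv.swap p.2 q.2) p.1 = q.1 := by
          rw [aux_gswap p.1 q.1 p.2 q.2 d1 hpe.ne d2 d3.symm hqe.ne d4, if_pos rfl]
        have g2 : (Equiv.swap p.1 q.1 * Equiv.swap p.2 q.2) p.2 = q.2 := by
          rw [aux_gswap p.1 q.1 p.2 q.2 d1 hpe.ne d2 d3.symm hqe.ne d4,
            if_neg hpe.ne', if_neg d3, if_pos rfl]
        unfold emap
        rw [g1, g2, min_eq_left hqe.le, max_eq_right hqe.le]
      · have g1 : (Equiv.swap p.1 q.1 * Equiv.swap p.2 q.2) q.1 = p.1 := by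
          rw [aux_gswap p.1 q.1 p.2 q.2 d1 hpe.ne d2 d3.symm hqe.ne d4,
            if_neg d1.symm, if_pos rfl]
        have g2 : (Equiv.swap p.1 q.1 * Equiv.swap p.2 q.2) q.2 = p.2 := by
          rw [aux_gswap p.1 q.1 p.2 q.2 d1 hpe.ne d2 d3.symm hqe.ne d4,
            if_neg d2.symm, if_neg hqe.ne', if_neg d4.symm, if_pos rfl]
        unfold emap
        rw [g1, g2, min_eq_left hpe.le, max_eq_right hpe.le]
      · intro x hx1 hx2 hx3 hx4
        rw [aux_gswap p.1 q.1 p.2 q.2 d1 hpe.ne d2 d3.symm hqe.ne d4,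
          if_neg hx1, if_neg hx3, if_neg hx2, if_neg hx4]
    · -- kap p.1 = kap q.2, kap p.2 = kap q.1
      refine ⟨Equiv.swap p.1 q.2 * Equiv.swap p.2 q.1,
        aux_keeps kap p.1 q.2 p.2 q.1 d2 hpe.ne d1 d4.symm hqe.ne' d3 hk1 hk2, ?_, ?_, ?_⟩
      · have g1 : (Equiv.swap p.1 q.2 * Equiv.swap p.2 q.1) p.1 = q.2 := by
          rw [aux_gswap p.1 q.2 p.2 q.1 d2 hpe.ne d1 d4.symm hqe.ne' d3, if_pos rfl]
        have g2 : (Equiv.swap p.1 q.2 * Equiv.swap p.2 q.1) p.2 = q.1 := by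
          rw [aux_gswap p.1 q.2 p.2 q.1 d2 hpe.ne d1 d4.symm hqe.ne' d3,
            if_neg hpe.ne', if_neg d4, if_pos rfl]
        unfold emap
        rw [g1, g2, min_eq_right hqe.le, max_eq_left hqe.le]
      · have g1 : (Equiv.swap p.1 q.2 * Equiv.swap p.2 q.1) q.1 = p.2 := by
          rw [aux_gswap p.1 q.2 p.2 q.1 d2 hpe.ne d1 d4.symm hqe.ne' d3,
            if_neg d1.symm, if_neg hqe.ne, if_neg d3.symm, if_pos rfl]
        have g2 : (Equiv.swap p.1 q.2 * Equiv.swap p.2 q.1) q.2 = p.1 := by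
          rw [aux_gswap p.1 q.2 p.2 q.1 d2 hpe.ne d1 d4.symm hqe.ne' d3,
            if_neg d2.symm, if_pos rfl]
        unfold emap
        rw [g1, g2, min_eq_right hpe.le, max_eq_left hpe.le]
      · intro x hx1 hx2 hx3 hx4
        rw [aux_gswap p.1 q.2 p.2 q.1 d2 hpe.ne d1 d4.symm hqe.ne' d3,
          if_neg hx1, if_neg hx4, if_neg hx2, if_neg hx3]
  have hfr : ∀ r ∈ σ, r ≠ p → r ≠ q → emap g r = r := by
    intro r hr hrp hrq
    have hre : r.1 < r.2 := hmat.1 r hr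
    obtain ⟨e1, e2, e3, e4⟩ := hmat.2 r hr p hp hrp
    obtain ⟨f1, f2, f3, f4⟩ := hmat.2 r hr q hq hrq
    have g1 : g r.1 = r.1 := hgen r.1 e1 e2 f1 f2
    have g2 : g r.2 = r.2 := hgen r.2 e3 e4 f3 f4
    unfold emap
    rw [g1, g2, min_eq_left hre.le, max_eq_right hre.le]
  have hact := aux_actC_basis kap c σ ⟨⟨hmat, p, hp, q, hq, hpq, hcase⟩, hc⟩ g p q hp hq hpq
    hfp hfq hfr
  have heq : (2 : ℤ) • basisOrZero ℤ (IsDelta kap) c σ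
      = basisOrZero ℤ (IsDelta kap) c σ
        - actC ℤ N (IsDelta kap) g c (basisOrZero ℤ (IsDelta kap) c σ) := by
    rw [hact, sub_neg_eq_add, two_smul]
  rw [heq]
  exact Submodule.subset_span ⟨_, g, hKeep, rfl⟩

lemma aux_two_mem {N n : ℕ} (kap : Fin N → Fin n) (c : ℕ)
    (ch : SChain ℤ (IsDelta kap) c) :
    (2 : ℤ) • ch ∈ ysub ℤ N n kap (IsDelta kap) c := by
  induction ch using Finsupp.induction with
  | zero => simp
  | single_add a b f ha hb ih =>
    rw [smul_add]
    refine Submodule.add_mem _ ?_ ih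
    obtain ⟨σ, hσ⟩ := a
    have hb1 : (Finsupp.single (⟨σ, hσ⟩ :
        {τ : Finset (Fin N × Fin N) // IsDelta kap τ ∧ τ.card = c}) b)
        = b • Finsupp.single (⟨σ, hσ⟩ :
          {τ : Finset (Fin N × Fin N) // IsDelta kap τ ∧ τ.card = c}) (1 : ℤ) := by
      rw [Finsupp.smul_single, smul_eq_mul, mul_one]
    have hb2 : basisOrZero ℤ (IsDelta kap) c σ
        = Finsupp.single (⟨σ, hσ⟩ :
          {τ : Finset (Fin N × Fin N) // IsDelta kap τ ∧ τ.card = c}) (1 : ℤ) := dif_pos hσ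
    rw [hb1, ← hb2, smul_comm]
    exact Submodule.smul_mem _ b (aux_two_basis_mem kap c σ hσ)

end AuxStatement11

open MatchPaper in
/-- Every element of the quotient chain complex `C̃(Δ_λ)/S_λ` satisfies
`2 x = 0`. -/
theorem delta_quotient_is_elementary_two_group
    (N n : ℕ) (lam : Fin n → ℕ) (kap : Fin N → Fin n)
    (hcard : ∀ i : Fin n, (Finset.univ.filter fun x => kap x = i).card = lam i)
    (c : ℕ) (x : QC ℤ N n kap (IsDelta kap) c) :
    2 • x = 0 := by
  obtain ⟨ch, rfl⟩ := Submodule.Quotient.mk_surjective _ x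
  rw [two_smul ℕ, ← Submodule.Quotient.mk_add, Submodule.Quotient.mk_eq_zero]
  have h := aux_two_mem kap c ch
  rwa [two_smul ℤ ch] at h
end
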